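/- arXiv:2003.01759 — 2 statements merged into one kernel-verified Lean document; each statement's English description precedes it below -/
import Mathlib

section
/- Let x* be a locally optimal solution of the problem (P) at which RCQ holds. Then h = 0 is a globally optimal solution of the linearised problem: minimize max_{ω∈W(x*)} ⟨∇ₓf(x*,ω), h⟩ subject to DG(x*)h ∈ T_K(G(x*)) and h ∈ T_A(x*); equivalently, max_{ω∈W(x*)} ⟨∇ₓf(x*,ω), h⟩ ≥ 0 for every h ∈ T_A(x*) with DG(x*)h ∈ T_K(G(x*)). -/
open Set Filter Topology Pointwise
open scoped RealInnerProductSpace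

noncomputable section

/-- The contingent (Bouligand tangent) cone to a set `C` at a point `x`. -/
def contingentCone {X : Type*} [NormedAddCommGroup X] [NormedSpace ℝ X]
    (C : Set X) (x : X) : Set X :=
  {h | ∃ (a : ℕ → ℝ) (v : ℕ → X), (∀ n, 0 < a n) ∧
    Tendsto a atTop (𝓝 0) ∧ Tendsto v atTop (𝓝 h) ∧ ∀ n, x + a n • v n ∈ C}

/-- Robinson's constraint qualification at a feasible point `x`. -/
def RobinsonCQ {d : ℕ} {Y : Type*} [NormedAddCommGroup Y] [NormedSpace ℝ Y]
    (G : EuclideanSpace ℝ (Fin d) → Y) (K : Set Y)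
    (A : Set (EuclideanSpace ℝ (Fin d))) (x : EuclideanSpace ℝ (Fin d)) : Prop :=
  (0 : Y) ∈ interior {y | ∃ a ∈ A, ∃ k ∈ K, y = G x + fderiv ℝ G x (a - x) - k}

variable {d : ℕ} {W : Type*} [TopologicalSpace W]
variable {Y : Type*} [NormedAddCommGroup Y] [NormedSpace ℝ Y]

/-- `F(x) = max_{ω ∈ W} f(x, ω)` (as a supremum). -/
def Fmax (f : EuclideanSpace ℝ (Fin d) → W → ℝ) (x : EuclideanSpace ℝ (Fin d)) : ℝ :=
  sSup (range fun ω => f x ω)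

/-- `W(x) = {ω ∈ W | f(x, ω) = F(x)}`, the set of active indices. -/
def activeSet (f : EuclideanSpace ℝ (Fin d) → W → ℝ) (x : EuclideanSpace ℝ (Fin d)) : Set W :=
  {ω | f x ω = Fmax f x}

/-- The set of active gradients `{∇ₓ f(x, ω) | ω ∈ W(x)}`. -/
def activeGrads (f : EuclideanSpace ℝ (Fin d) → W → ℝ) (x : EuclideanSpace ℝ (Fin d)) :
    Set (EuclideanSpace ℝ (Fin d)) :=
  (fun ω => gradient (fun z => f z ω) x) '' activeSet f x

/-- The directional derivative `F'(x, h) = max_{ω ∈ W(x)} ⟨∇ₓ f(x, ω), h⟩` of the max-function. -/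
def Fdir (f : EuclideanSpace ℝ (Fin d) → W → ℝ) (x h : EuclideanSpace ℝ (Fin d)) : ℝ :=
  sSup ((fun v => ⟪v, h⟫) '' activeGrads f x)

/-- The Hadamard subdifferential `∂F(x) = co {∇ₓ f(x, ω) | ω ∈ W(x)}` of the max-function. -/
def subdiffF (f : EuclideanSpace ℝ (Fin d) → W → ℝ) (x : EuclideanSpace ℝ (Fin d)) :
    Set (EuclideanSpace ℝ (Fin d)) :=
  convexHull ℝ (activeGrads f x)

/-- The polar cone of a set in `ℝ^d`. -/
def polarCone {d : ℕ} (C : Set (EuclideanSpace ℝ (Fin d))) : Set (EuclideanSpace ℝ (Fin d)) :=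
  {v | ∀ h ∈ C, ⟪v, h⟫ ≤ 0}

/-- The normal cone `N_A(x)` to `A` at `x`, i.e. the polar of the contingent cone. -/
def normalCone {d : ℕ} (A : Set (EuclideanSpace ℝ (Fin d))) (x : EuclideanSpace ℝ (Fin d)) :
    Set (EuclideanSpace ℝ (Fin d)) :=
  polarCone (contingentCone A x)

/-- The polar cone `K* = {y* | ⟨y*, y⟩ ≤ 0 ∀ y ∈ K}` of `K ⊆ Y` in the dual space. -/
def dualPolar (K : Set Y) : Set (Y →L[ℝ] ℝ) :=
  {l | ∀ y ∈ K, l y ≤ 0}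

/-- The cone `𝒩(x) = [DG(x)]*(K* ∩ lin(G(x))^⊥)`. -/
def calN (G : EuclideanSpace ℝ (Fin d) → Y) (K : Set Y) (x : EuclideanSpace ℝ (Fin d)) :
    Set (EuclideanSpace ℝ (Fin d)) :=
  {v | ∃ l : Y →L[ℝ] ℝ, l ∈ dualPolar K ∧ l (G x) = 0 ∧
    ∀ u : EuclideanSpace ℝ (Fin d), ⟪v, u⟫ = l (fderiv ℝ G x u)}

/-- `λ` is a Lagrange multiplier of problem (P) at a feasible point `x`:
`λ ∈ K*`, `⟨λ, G(x)⟩ = 0` and `[L(·,λ)]'(x, h) ≥ 0` for all `h ∈ T_A(x)`, where the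
directional derivative of the Lagrangian equals `F'(x,h) + ⟨λ, DG(x) h⟩`. -/
def IsLagrangeMult (f : EuclideanSpace ℝ (Fin d) → W → ℝ) (G : EuclideanSpace ℝ (Fin d) → Y)
    (K : Set Y) (A : Set (EuclideanSpace ℝ (Fin d))) (x : EuclideanSpace ℝ (Fin d))
    (l : Y →L[ℝ] ℝ) : Prop :=
  l ∈ dualPolar K ∧ l (G x) = 0 ∧
    ∀ h ∈ contingentCone A x, 0 ≤ Fdir f x h + l (fderiv ℝ G x h)

/-!
Statement 1: if x* is a locally optimal solution of (P) and RCQ holds at x*, then h = 0 is a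
globally optimal solution of the linearised problem, i.e.
max_{ω∈W(x*)} ⟨∇ₓf(x*,ω), h⟩ ≥ 0 for every h ∈ T_A(x*) with DG(x*)h ∈ T_K(G(x*)).
-/

/- ------------------ auxiliary lemmas ------------------ -/

theorem mapClusterPt_eq_of_tendsto' {α X : Type*} [TopologicalSpace X] [T2Space X]
    {F : Filter α} {u : α → X} {x y : X} (h : MapClusterPt x F u)
    (ht : Tendsto u F (𝓝 y)) : x = y := by
  have h1 : (𝓝 x ⊓ map u F).NeBot := h
  have h2 : 𝓝 x ⊓ map u F ≤ 𝓝 x ⊓ 𝓝 y := inf_le_inf_left _ ht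
  exact eq_of_nhds_neBot (h1.mono h2)

theorem mapClusterPt_mem_of_eventually' {α X : Type*} [TopologicalSpace X]
    {F : Filter α} [NeBot F] {u : α → X} {x : X} {s : Set X} (h : MapClusterPt x F u)
    (hs : IsClosed s) (hev : ∀ᶠ a in F, u a ∈ s) : x ∈ s := by
  by_contra hx
  have h1 : sᶜ ∈ 𝓝 x := hs.isOpen_compl.mem_nhds hx
  have h2 := (mapClusterPt_iff_frequently.1 h) _ h1
  exact (h2.and_eventually hev).exists.elim (fun a ha => ha.1 ha.2)

theorem MapClusterPt.prod_tendsto' {α X Y : Type*} [TopologicalSpace X] [TopologicalSpace Y]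
    {F : Filter α} {u : α → X} {v : α → Y} {x : X} {y : Y}
    (hu : MapClusterPt x F u) (hv : Tendsto v F (𝓝 y)) :
    MapClusterPt (x, y) F (fun a => (u a, v a)) := by
  rw [mapClusterPt_iff_frequently]
  intro s hs
  rcases mem_nhds_prod_iff.1 hs with ⟨s₁, hs₁, s₂, hs₂, hsub⟩
  have h1 := (mapClusterPt_iff_frequently.1 hu) s₁ hs₁
  have h2 : ∀ᶠ a in F, v a ∈ s₂ := hv hs₂
  exact (h1.and_eventually h2).mono fun a ha => hsub ⟨ha.1, ha.2⟩

theorem stage1 {E Z : Type*} [NormedAddCommGroup E] [NormedSpace ℝ E] [FiniteDimensional ℝ E]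
    [NormedAddCommGroup Z] [NormedSpace ℝ Z] [CompleteSpace Z]
    (A : Set E) (K : Set Z) (hAcl : IsClosed A) (hAconv : Convex ℝ A)
    (hKcl : IsClosed K) (hKconv : Convex ℝ K)
    (T : E →L[ℝ] Z) (xs : E) (hxA : xs ∈ A) (g0 : Z) (hg0 : g0 ∈ K)
    (hint : (0:Z) ∈ interior {y | ∃ a ∈ A, ∃ k ∈ K, y = g0 + T (a - xs) - k}) :
    ∃ c > 0, ∃ ρ > 0, ∀ y : Z, ‖y‖ ≤ ρ →
      ∃ a ∈ A, ∃ k ∈ K, g0 + T (a - xs) - k = y ∧ ‖a - xs‖ ≤ c * ‖y‖ := by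
  set Dr : ℝ → Set Z := fun r => {y | ∃ a ∈ A, ‖a - xs‖ ≤ r ∧ ∃ k ∈ K, y = g0 + T (a - xs) - k}
    with hDr
  have hzero : ∀ r : ℝ, 0 ≤ r → (0:Z) ∈ Dr r := by
    intro r hr
    exact ⟨xs, hxA, by simpa using hr, g0, hg0, by simp⟩
  have hsub : ∀ (θ : ℝ) (a₁ a₂ : E), θ • a₁ + (1-θ) • a₂ - xs
      = θ • (a₁ - xs) + (1-θ) • (a₂ - xs) := by
    intro θ a₁ a₂; module
  have hcomb : ∀ {r₁ r₂ θ : ℝ} {y₁ y₂ : Z}, 0 ≤ θ → θ ≤ 1 → y₁ ∈ Dr r₁ → y₂ ∈ Dr r₂ →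
      θ • y₁ + (1-θ) • y₂ ∈ Dr (θ * r₁ + (1-θ) * r₂) := by
    rintro r₁ r₂ θ y₁ y₂ hθ hθ1 ⟨a₁, ha₁, hn₁, k₁, hk₁, he₁⟩ ⟨a₂, ha₂, hn₂, k₂, hk₂, he₂⟩
    have hr₁ : (0:ℝ) ≤ r₁ := le_trans (norm_nonneg _) hn₁
    have hr₂ : (0:ℝ) ≤ r₂ := le_trans (norm_nonneg _) hn₂
    refine ⟨θ • a₁ + (1-θ) • a₂, hAconv ha₁ ha₂ hθ (by linarith) (by ring), ?_,
      θ • k₁ + (1-θ) • k₂, hKconv hk₁ hk₂ hθ (by linarith) (by ring), ?_⟩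
    · rw [hsub]
      calc ‖θ • (a₁ - xs) + (1-θ) • (a₂ - xs)‖
          ≤ ‖θ • (a₁ - xs)‖ + ‖(1-θ) • (a₂ - xs)‖ := norm_add_le _ _
        _ = |θ| * ‖a₁ - xs‖ + |1-θ| * ‖a₂ - xs‖ := by rw [norm_smul, norm_smul]; rfl
        _ = θ * ‖a₁ - xs‖ + (1-θ) * ‖a₂ - xs‖ := by
            rw [abs_of_nonneg hθ, abs_of_nonneg (by linarith)]
        _ ≤ θ * r₁ + (1-θ) * r₂ := by
            have h1 := mul_le_mul_of_nonneg_left hn₁ hθ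
            have h2 := mul_le_mul_of_nonneg_left hn₂ (by linarith : (0:ℝ) ≤ 1-θ)
            linarith
    · rw [he₁, he₂, hsub, map_add, map_smul, map_smul]
      module
  have hclosed : ∀ n : ℕ, IsClosed (Dr n) := by
    intro n
    have heq : Dr n = ((fun a => g0 + T (a - xs)) '' (A ∩ Metric.closedBall xs n))
        + (fun k => -k) '' K := by
      ext y
      constructor
      · rintro ⟨a, ha, hn, k, hk, he⟩
        refine Set.mem_add.2 ⟨g0 + T (a - xs), ⟨a, ⟨ha, ?_⟩, rfl⟩, -k, ⟨k, hk, rfl⟩, ?_⟩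
        · rwa [Metric.mem_closedBall, dist_eq_norm]
        · rw [he]; abel
      · rw [Set.mem_add]
        rintro ⟨u, ⟨a, ⟨ha, hab⟩, rfl⟩, w, ⟨k, hk, rfl⟩, he⟩
        rw [Metric.mem_closedBall, dist_eq_norm] at hab
        exact ⟨a, ha, hab, k, hk, by rw [← he]; exact (sub_eq_add_neg _ _).symm⟩
    rw [heq]
    have hcpt : IsCompact ((fun a => g0 + T (a - xs)) '' (A ∩ Metric.closedBall xs n)) := by
      refine IsCompact.image ((isCompact_closedBall xs n).inter_left hAcl) ?_
      exact continuous_const.add (T.continuous.comp (continuous_id.sub continuous_const))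
    have hKcl' : IsClosed ((fun k : Z => -k) '' K) := by
      have : (fun k : Z => -k) '' K = (fun k : Z => -k) ⁻¹' K := by
        ext w
        constructor
        · rintro ⟨k, hk, rfl⟩; simpa using hk
        · intro hw; exact ⟨-w, hw, neg_neg w⟩
      rw [this]
      exact hKcl.preimage continuous_neg
    exact hKcl'.add_left_of_isCompact hcpt
  -- covering
  obtain ⟨ρ₀, hρ₀, hball⟩ : ∃ ρ₀ > 0, Metric.ball (0:Z) ρ₀ ⊆ ⋃ n : ℕ, Dr n := by
    rcases Metric.mem_nhds_iff.1 (mem_interior_iff_mem_nhds.1 hint) with ⟨ε, hε, hsubS⟩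
    refine ⟨ε, hε, fun y hy => ?_⟩
    rcases hsubS hy with ⟨a, ha, k, hk, he⟩
    exact Set.mem_iUnion.2 ⟨⌈‖a - xs‖⌉₊, a, ha, Nat.le_ceil _, k, hk, he⟩
  -- Baire
  obtain ⟨N, y₀, hy₀⟩ : ∃ (N : ℕ) (y₀ : Z), y₀ ∈ interior (Dr N) := by
    by_contra hcon
    push_neg at hcon
    have hmeagre : ∀ n : ℕ, IsMeagre (Dr n) := by
      intro n
      have hd : Dense (Dr n)ᶜ := by
        rw [← interior_eq_empty_iff_dense_compl]
        ext y; simp only [Set.mem_empty_iff_false, iff_false]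
        exact fun hy => hcon n y hy
      exact residual_of_dense_open (hclosed n).isOpen_compl hd
    have hM : IsMeagre (Metric.ball (0:Z) ρ₀) := (isMeagre_iUnion hmeagre).mono hball
    have hdense : Dense (Metric.ball (0:Z) ρ₀)ᶜ := dense_of_mem_residual hM
    rcases hdense.exists_mem_open Metric.isOpen_ball ⟨0, Metric.mem_ball_self hρ₀⟩ with
      ⟨y, hy1, hy2⟩
    exact hy1 hy2
  obtain ⟨r, hr, hballN⟩ : ∃ r > 0, Metric.ball y₀ r ⊆ Dr N :=
    Metric.mem_nhds_iff.1 (mem_interior_iff_mem_nhds.1 hy₀)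
  set lam : ℝ := min 1 (ρ₀ / (2 * (‖y₀‖ + 1))) with hlam
  have hlam0 : 0 < lam := lt_min one_pos (by positivity)
  have hlam1 : lam ≤ 1 := min_le_left _ _
  have hlamy : lam * ‖y₀‖ < ρ₀ := by
    have h1 : lam ≤ ρ₀ / (2 * (‖y₀‖ + 1)) := min_le_right _ _
    have h2 : 0 ≤ ‖y₀‖ := norm_nonneg _
    have h3 : lam * ‖y₀‖ ≤ (ρ₀ / (2 * (‖y₀‖ + 1))) * ‖y₀‖ := by
      apply mul_le_mul_of_nonneg_right h1 h2
    have h4 : (ρ₀ / (2 * (‖y₀‖ + 1))) * ‖y₀‖ < ρ₀ := by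
      rw [div_mul_eq_mul_div, div_lt_iff₀ (by positivity)]
      nlinarith
    linarith
  have hball2 : ∀ z : Z, ‖z - lam • y₀‖ < lam * r → z ∈ Dr (lam * N) := by
    intro z hz
    have hinv : lam⁻¹ • z ∈ Metric.ball y₀ r := by
      rw [Metric.mem_ball, dist_eq_norm]
      have : lam⁻¹ • z - y₀ = lam⁻¹ • (z - lam • y₀) := by
        rw [smul_sub, smul_smul, inv_mul_cancel₀ (ne_of_gt hlam0), one_smul]
      rw [this, norm_smul, Real.norm_eq_abs, abs_of_pos (inv_pos.2 hlam0)]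
      rw [inv_mul_lt_iff₀ hlam0]
      linarith [hz]
    have hmem : lam⁻¹ • z ∈ Dr N := hballN hinv
    have := hcomb (le_of_lt hlam0) hlam1 hmem (hzero 0 le_rfl)
    simp only [smul_zero, add_zero, mul_zero] at this
    rwa [smul_smul, mul_inv_cancel₀ (ne_of_gt hlam0), one_smul] at this
  obtain ⟨M, hM⟩ : ∃ M : ℕ, -(lam • y₀) ∈ Dr M := by
    have : -(lam • y₀) ∈ Metric.ball (0:Z) ρ₀ := by
      rw [Metric.mem_ball, dist_zero_right, norm_neg, norm_smul, Real.norm_eq_abs,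
        abs_of_pos hlam0]
      exact hlamy
    exact Set.mem_iUnion.1 (hball this)
  set P : ℝ := (lam * N + M) / 2 with hP
  have hPpos : 0 ≤ P := by positivity
  set ρ : ℝ := lam * r / 4 with hρdef
  have hρpos : 0 < ρ := by positivity
  have hsmall : ∀ v : Z, ‖v‖ ≤ ρ → v ∈ Dr P := by
    intro v hv
    have hz : ((2:ℝ) • v + lam • y₀) ∈ Dr (lam * N) := by
      apply hball2
      have : (2:ℝ) • v + lam • y₀ - lam • y₀ = (2:ℝ) • v := by abel
      rw [this, norm_smul, Real.norm_eq_abs]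
      have : |(2:ℝ)| * ‖v‖ ≤ 2 * ρ := by
        rw [abs_of_pos (by norm_num : (0:ℝ) < 2)]
        linarith
      calc |(2:ℝ)| * ‖v‖ ≤ 2 * ρ := this
        _ < lam * r := by rw [hρdef]; linarith [mul_pos hlam0 hr]
    have := hcomb (by norm_num : (0:ℝ) ≤ 1/2) (by norm_num) hz hM
    have heqv : (1/2 : ℝ) • ((2:ℝ) • v + lam • y₀) + (1 - 1/2 : ℝ) • (-(lam • y₀)) = v := by
      module
    rw [heqv] at this
    have : v ∈ Dr ((1/2) * (lam * N) + (1 - 1/2) * M) := this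
    have heqr : (1/2 : ℝ) * (lam * N) + (1 - 1/2) * M = P := by rw [hP]; ring
    rwa [heqr] at this
  refine ⟨P / ρ + 1, by positivity, ρ, hρpos, fun y hy => ?_⟩
  rcases eq_or_ne y 0 with rfl | hy0
  · exact ⟨xs, hxA, g0, hg0, by simp, by simp⟩
  · have hny : 0 < ‖y‖ := norm_pos_iff.2 hy0
    set θ : ℝ := ‖y‖ / ρ with hθdef
    have hθ0 : 0 < θ := by positivity
    have hθ1 : θ ≤ 1 := by rw [hθdef, div_le_one hρpos]; exact hy
    have hw : ((ρ / ‖y‖) • y) ∈ Dr P := by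
      apply hsmall
      rw [norm_smul, Real.norm_eq_abs, abs_of_pos (by positivity)]
      rw [div_mul_cancel₀ _ (ne_of_gt hny)]
    have := hcomb (le_of_lt hθ0) hθ1 hw (hzero 0 le_rfl)
    simp only [smul_zero, add_zero, mul_zero] at this
    have heqy : θ • ((ρ / ‖y‖) • y) = y := by
      rw [smul_smul, hθdef, div_mul_div_comm, mul_comm, ← div_mul_div_comm,
        div_self (ne_of_gt hny), div_self (ne_of_gt hρpos), one_mul, one_smul]
    rw [heqy] at this
    rcases this with ⟨a, ha, hn, k, hk, he⟩
    refine ⟨a, ha, k, hk, he.symm, ?_⟩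
    calc ‖a - xs‖ ≤ θ * P := hn
      _ = P / ρ * ‖y‖ := by rw [hθdef]; ring
      _ ≤ (P / ρ + 1) * ‖y‖ := by nlinarith [norm_nonneg y]

set_option maxHeartbeats 4000000 in
theorem stage2 {E Z : Type*} [NormedAddCommGroup E] [NormedSpace ℝ E] [FiniteDimensional ℝ E]
    [NormedAddCommGroup Z] [NormedSpace ℝ Z]
    (A : Set E) (K : Set Z) (hAcl : IsClosed A) (hAconv : Convex ℝ A)
    (hKcl : IsClosed K) (hKconv : Convex ℝ K)
    (G : E → Z) (hG : ContDiff ℝ 1 G) (xs : E) (hxA : xs ∈ A) (hxK : G xs ∈ K)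
    (c ρ : ℝ) (hc : 0 < c) (hρ : 0 < ρ)
    (hsurj : ∀ y : Z, ‖y‖ ≤ ρ → ∃ a ∈ A, ∃ k ∈ K,
      G xs + fderiv ℝ G xs (a - xs) - k = y ∧ ‖a - xs‖ ≤ c * ‖y‖) :
    ∃ c' > 0, ∃ ε > 0, ∀ z ∈ A, ‖z - xs‖ ≤ ε → Metric.infDist (G z) K ≤ ε →
      ∃ x ∈ A, G x ∈ K ∧ ‖x - z‖ ≤ c' * Metric.infDist (G z) K := by
  classical
  have hGdiff : Differentiable ℝ G := hG.differentiable one_ne_zero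
  set T := fderiv ℝ G xs with hT
  clear_value T
  set C₁ : ℝ := 2*c + (2/ρ)*(c+1) with hC₁def
  have hC₁ : 0 < C₁ := by positivity
  clear_value C₁
  set δ : ℝ := min (1/(2*C₁)) (ρ/8) with hδdef
  have hδ : 0 < δ := lt_min (by positivity) (by positivity)
  have hδC : δ * C₁ ≤ 1/2 := by
    have hδle : δ ≤ 1/(2*C₁) := min_le_left _ _
    calc δ * C₁ ≤ (1/(2*C₁)) * C₁ := mul_le_mul_of_nonneg_right hδle (le_of_lt hC₁)
      _ = 1/2 := by field_simp
  have hδρ : δ ≤ ρ/8 := min_le_right _ _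
  clear_value δ
  -- choose η
  obtain ⟨η, hη0, hη1, hηd⟩ : ∃ η > 0, η ≤ 1 ∧
      ∀ x : E, ‖x - xs‖ ≤ η → ‖fderiv ℝ G x - T‖ ≤ δ := by
    have hcont : ContinuousAt (fderiv ℝ G) xs := (hG.continuous_fderiv one_ne_zero).continuousAt
    rcases Metric.continuousAt_iff.1 hcont δ hδ with ⟨η', hη', hball⟩
    refine ⟨min (η'/2) 1, lt_min (by positivity) one_pos, min_le_right _ _, fun x hx => ?_⟩
    have hd : dist x xs < η' := by
      rw [dist_eq_norm]
      calc ‖x - xs‖ ≤ min (η'/2) 1 := hx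
        _ ≤ η'/2 := min_le_left _ _
        _ < η' := by linarith
    have h2 := hball hd
    rw [dist_eq_norm] at h2
    rw [hT]
    exact le_of_lt h2
  -- MVT estimate
  have hMVT : ∀ x x' : E, ‖x - xs‖ ≤ η → ‖x' - xs‖ ≤ η →
      ‖G x' - G x - T (x' - x)‖ ≤ δ * ‖x' - x‖ := by
    intro x x' hx hx'
    have hdiff : ∀ w ∈ Metric.closedBall xs η, DifferentiableAt ℝ (fun u => G u - T u) w :=
      fun w _ => (hGdiff w).sub (T.differentiableAt)
    have hbound : ∀ w ∈ Metric.closedBall xs η, ‖fderiv ℝ (fun u => G u - T u) w‖ ≤ δ := by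
      intro w hw
      rw [Metric.mem_closedBall, dist_eq_norm] at hw
      rw [fderiv_fun_sub (hGdiff w) T.differentiableAt, T.fderiv]
      exact hηd w hw
    have hxb : x ∈ Metric.closedBall xs η := by rwa [Metric.mem_closedBall, dist_eq_norm]
    have hx'b : x' ∈ Metric.closedBall xs η := by rwa [Metric.mem_closedBall, dist_eq_norm]
    have hest := (convex_closedBall xs η).norm_image_sub_le_of_norm_fderiv_le hdiff hbound hxb hx'b
    calc ‖G x' - G x - T (x' - x)‖ = ‖(G x' - T x') - (G x - T x)‖ := by
          rw [map_sub]; congr 1; abel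
      _ ≤ δ * ‖x' - x‖ := hest
  set ε : ℝ := min (η/(1+4*C₁)) (ρ/16) with hεdef
  have hε0 : 0 < ε := lt_min (by positivity) (by positivity)
  have hεareas : ε * (1 + 4*C₁) ≤ η := by
    have h1 : ε ≤ η/(1+4*C₁) := min_le_left _ _
    calc ε * (1+4*C₁) ≤ (η/(1+4*C₁)) * (1+4*C₁) :=
          mul_le_mul_of_nonneg_right h1 (by positivity)
      _ = η := div_mul_cancel₀ η (by positivity)
  have hερ : ε ≤ ρ/16 := min_le_right _ _
  clear_value ε
  have hKne : K.Nonempty := ⟨G xs, hxK⟩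
  refine ⟨4*C₁, by positivity, ε, hε0, fun z hzA hzxs hzK => ?_⟩
  set β := Metric.infDist (G z) K with hβdef
  have hβ0 : 0 ≤ β := Metric.infDist_nonneg
  rcases eq_or_lt_of_le hβ0 with hβz | hβpos
  · refine ⟨z, hzA, ?_, by simpa using mul_nonneg (by positivity) hβ0⟩
    rw [hβdef] at hβz
    exact (hKcl.mem_iff_infDist_zero hKne).2 hβz.symm
  obtain ⟨k₀, hk₀K, hk₀d⟩ : ∃ k ∈ K, dist (G z) k < 2*β := by
    rw [← Metric.infDist_lt_iff hKne, ← hβdef]; linarith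
  clear_value β
  set r₀ : ℝ := ‖G z - k₀‖ with hr₀def
  have hr₀0 : 0 ≤ r₀ := norm_nonneg _
  have hr₀β : r₀ ≤ 2*β := by rw [hr₀def, ← dist_eq_norm]; exact le_of_lt hk₀d
  have hr₀ε : r₀ ≤ 2*ε := by linarith
  set Inv : ℕ → E × Z → Prop := fun j p => p.1 ∈ A ∧ p.2 ∈ K ∧
    ‖G p.1 - p.2‖ ≤ r₀ * (1/2)^j ∧ ‖p.1 - z‖ ≤ 2*C₁*r₀*(1 - (1/2)^j) with hInvdef
  have hstep : ∀ (j : ℕ) (p : E × Z), Inv j p →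
      ∃ q : E × Z, Inv (j+1) q ∧ ‖q.1 - p.1‖ ≤ C₁ * (r₀ * (1/2)^j) := by
    rintro j p ⟨hpA, hpK, hres, hdist⟩
    have hhalf : ((1:ℝ)/2)^j ≤ 1 := pow_le_one₀ (by norm_num) (by norm_num)
    have hhalfpos : (0:ℝ) < (1/2)^j := by positivity
    have hhalfmono : ((1:ℝ)/2)^(j+1) ≤ (1/2)^j :=
      pow_le_pow_of_le_one (by norm_num) (by norm_num) (Nat.le_succ j)
    have hhalfpos' : (0:ℝ) < (1/2)^(j+1) := by positivity
    set rj : ℝ := ‖G p.1 - p.2‖ with hrjdef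
    have hrj0 : 0 ≤ rj := norm_nonneg _
    clear_value rj
    have hrjr₀ : rj ≤ r₀ * (1/2)^j := hres
    have hrjr₀' : rj ≤ r₀ := le_trans hrjr₀ (mul_le_of_le_one_right hr₀0 hhalf)
    have hrjρ : rj ≤ ρ/8 := by linarith
    have hp1ball : ‖p.1 - xs‖ ≤ η := by
      have h2 : 2*C₁*r₀*(1 - (1/2)^j) ≤ 2*C₁*r₀ := by
        linarith [mul_nonneg (mul_nonneg (by linarith : (0:ℝ) ≤ 2*C₁) hr₀0) hhalfpos.le]
      have h3 : 2*C₁*r₀ ≤ 2*C₁*(2*ε) :=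
        mul_le_mul_of_nonneg_left hr₀ε (by linarith : (0:ℝ) ≤ 2*C₁)
      calc ‖p.1 - xs‖ ≤ ‖p.1 - z‖ + ‖z - xs‖ := by
            have h4 := norm_add_le (p.1 - z) (z - xs); simpa using h4
        _ ≤ 2*C₁*r₀*(1 - (1/2)^j) + ε := by linarith
        _ ≤ 2*C₁*(2*ε) + ε := by linarith
        _ = ε * (1 + 4*C₁) := by ring
        _ ≤ η := hεareas
    rcases eq_or_lt_of_le hrj0 with hrjz | hrjpos
    · refine ⟨p, ⟨hpA, hpK, ?_, ?_⟩, ?_⟩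
      · rw [← hrjdef, ← hrjz]; positivity
      · calc ‖p.1 - z‖ ≤ 2*C₁*r₀*(1 - (1/2)^j) := hdist
          _ ≤ 2*C₁*r₀*(1 - (1/2)^(j+1)) := by
              have hnn : (0:ℝ) ≤ 2*C₁*r₀ := by positivity
              linarith [mul_le_mul_of_nonneg_left hhalfmono hnn]
      · simp only [sub_self, norm_zero]; positivity
    · -- main step
      set lam : ℝ := 2*rj/ρ with hlamdef
      have hlam0 : 0 < lam := by positivity
      have hlam1 : lam ≤ 1/4 := by
        rw [hlamdef, div_le_iff₀ hρ]; linarith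
      have hcancel : lam * (ρ/(2*rj)) = 1 := by
        rw [hlamdef]; field_simp
      have hlamρ : lam * ρ = 2*rj := by
        rw [hlamdef]; field_simp
      have hlamη : lam * η ≤ (2/ρ) * rj := by
        have h3 : lam * η ≤ lam * 1 := mul_le_mul_of_nonneg_left hη1 (le_of_lt hlam0)
        rw [mul_one] at h3
        calc lam * η ≤ lam := h3
          _ = (2/ρ) * rj := by rw [hlamdef]; ring
      clear_value lam
      set y : Z := (ρ/(2*rj)) • (p.2 - G p.1) - p.2 + G xs + T (p.1 - xs) with hydef
      have hGlin : ‖G xs + T (p.1 - xs) - G p.1‖ ≤ δ * ‖p.1 - xs‖ := by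
        have h5 := hMVT xs p.1 (by simpa using le_of_lt hη0) hp1ball
        calc ‖G xs + T (p.1 - xs) - G p.1‖ = ‖G p.1 - G xs - T (p.1 - xs)‖ := by
              rw [← norm_neg]; congr 1; abel
          _ ≤ δ * ‖p.1 - xs‖ := h5
      have hynorm : ‖y‖ ≤ ρ := by
        have h1 : ‖(ρ/(2*rj)) • (p.2 - G p.1)‖ = ρ/2 := by
          rw [norm_smul, Real.norm_eq_abs, abs_of_pos (by positivity), norm_sub_rev, ← hrjdef]
          field_simp
        have h2 : ‖G xs + T (p.1 - xs) - p.2‖ ≤ δ * η + rj := by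
          have hδx : δ * ‖p.1 - xs‖ ≤ δ * η := mul_le_mul_of_nonneg_left hp1ball (le_of_lt hδ)
          calc ‖G xs + T (p.1 - xs) - p.2‖
              = ‖(G xs + T (p.1 - xs) - G p.1) + (G p.1 - p.2)‖ := by congr 1; abel
            _ ≤ ‖G xs + T (p.1 - xs) - G p.1‖ + ‖G p.1 - p.2‖ := norm_add_le _ _
            _ ≤ δ * η + rj := by rw [← hrjdef]; linarith
        have hδη : δ * η ≤ δ := by
          have := mul_le_mul_of_nonneg_left hη1 (le_of_lt hδ); linarith [this]
        calc ‖y‖ = ‖(ρ/(2*rj)) • (p.2 - G p.1) + (G xs + T (p.1 - xs) - p.2)‖ := by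
              rw [hydef]; congr 1; abel
          _ ≤ ‖(ρ/(2*rj)) • (p.2 - G p.1)‖ + ‖G xs + T (p.1 - xs) - p.2‖ := norm_add_le _ _
          _ ≤ ρ/2 + (δ * η + rj) := by rw [h1]; linarith
          _ ≤ ρ := by linarith
      have hylam : lam • y = (p.2 - G p.1) - lam • p.2 + lam • G xs + lam • T (p.1 - xs) := by
        have hexp : lam • y = (lam * (ρ/(2*rj))) • (p.2 - G p.1) - lam • p.2 + lam • G xs
            + lam • T (p.1 - xs) := by rw [hydef]; module
        rw [hexp, hcancel, one_smul]
      clear_value y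
      obtain ⟨a, haA, k, hkK, he, habound⟩ := hsurj y hynorm
      set q1 : E := p.1 + lam • (a - p.1) with hq1def
      set q2 : Z := (1-lam) • p.2 + lam • k with hq2def
      have hq1A : q1 ∈ A := by
        have h6 : q1 = (1-lam) • p.1 + lam • a := by rw [hq1def]; module
        rw [h6]
        exact hAconv hpA haA (by linarith) (le_of_lt hlam0) (by ring)
      have hq2K : q2 ∈ K := hKconv hpK hkK (by linarith) (le_of_lt hlam0) (by ring)
      have hTa : T (a - xs) = y + k - G xs := by rw [← he]; abel
      have hq1sub : q1 - p.1 = lam • (a - p.1) := by rw [hq1def]; abel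
      have hkey : G q1 - q2 = G q1 - G p.1 - T (q1 - p.1) := by
        have hT2 : T (q1 - p.1) = lam • T (a - xs) - lam • T (p.1 - xs) := by
          rw [hq1sub, map_smul, show a - p.1 = (a - xs) - (p.1 - xs) by abel, map_sub, smul_sub]
        have h0 : G p.1 + T (q1 - p.1) - q2 = 0 := by
          rw [hT2, hTa, show lam • (y + k - G xs) = lam • y + lam • k - lam • G xs from by module,
            hylam, hq2def]
          module
        have h7 : q2 = G p.1 + T (q1 - p.1) := by
          have h8 : (G p.1 + T (q1 - p.1)) - q2 = 0 := by rw [← h0]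
          have := sub_eq_zero.1 h8
          exact this.symm
        rw [h7]; abel
      clear_value q1 q2
      have hstepsize : ‖q1 - p.1‖ ≤ C₁ * rj := by
        rw [hq1sub, norm_smul, Real.norm_eq_abs, abs_of_pos hlam0]
        have hap : ‖a - p.1‖ ≤ c * ρ + η := by
          have h9 : c * ‖y‖ ≤ c * ρ := mul_le_mul_of_nonneg_left hynorm (le_of_lt hc)
          calc ‖a - p.1‖ = ‖(a - xs) - (p.1 - xs)‖ := by congr 1; abel
            _ ≤ ‖a - xs‖ + ‖p.1 - xs‖ := norm_sub_le _ _
            _ ≤ c * ρ + η := by linarith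
        calc lam * ‖a - p.1‖ ≤ lam * (c * ρ + η) :=
              mul_le_mul_of_nonneg_left hap (le_of_lt hlam0)
          _ = c * (lam * ρ) + lam * η := by ring
          _ ≤ c * (2*rj) + (2/ρ)*rj := by rw [hlamρ]; linarith
          _ ≤ C₁ * rj := by
              rw [hC₁def]
              linarith [mul_nonneg (mul_nonneg (by positivity : (0:ℝ) ≤ 2/ρ) hc.le) hrj0]
      have hq1z : ‖q1 - z‖ ≤ 2*C₁*r₀*(1 - (1/2)^(j+1)) := by
        have h11 : C₁ * rj ≤ C₁ * (r₀ * (1/2)^j) :=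
          mul_le_mul_of_nonneg_left hrjr₀ (le_of_lt hC₁)
        calc ‖q1 - z‖ ≤ ‖q1 - p.1‖ + ‖p.1 - z‖ := by
              have h12 := norm_add_le (q1 - p.1) (p.1 - z); simpa using h12
          _ ≤ C₁ * (r₀ * (1/2)^j) + 2*C₁*r₀*(1 - (1/2)^j) := by linarith
          _ = 2*C₁*r₀*(1 - (1/2)^(j+1)) := by rw [pow_succ]; ring
      have hq1ball : ‖q1 - xs‖ ≤ η := by
        have h2 : 2*C₁*r₀*(1 - (1/2)^(j+1)) ≤ 2*C₁*r₀ := by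
          linarith [mul_nonneg (mul_nonneg (by linarith : (0:ℝ) ≤ 2*C₁) hr₀0) hhalfpos'.le]
        have h3 : 2*C₁*r₀ ≤ 2*C₁*(2*ε) :=
          mul_le_mul_of_nonneg_left hr₀ε (by linarith : (0:ℝ) ≤ 2*C₁)
        calc ‖q1 - xs‖ ≤ ‖q1 - z‖ + ‖z - xs‖ := by
              have h13 := norm_add_le (q1 - z) (z - xs); simpa using h13
          _ ≤ 2*C₁*(2*ε) + ε := by linarith
          _ = ε * (1 + 4*C₁) := by ring
          _ ≤ η := hεareas
      have hnewres : ‖G q1 - q2‖ ≤ r₀ * (1/2)^(j+1) := by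
        rw [hkey]
        have h14 : δ * ‖q1 - p.1‖ ≤ δ * (C₁ * rj) :=
          mul_le_mul_of_nonneg_left hstepsize (le_of_lt hδ)
        calc ‖G q1 - G p.1 - T (q1 - p.1)‖ ≤ δ * ‖q1 - p.1‖ := hMVT p.1 q1 hp1ball hq1ball
          _ ≤ δ * (C₁ * rj) := h14
          _ ≤ (1/2) * rj := by linarith [mul_le_mul_of_nonneg_right hδC hrj0]
          _ ≤ (1/2) * (r₀ * (1/2)^j) := by linarith
          _ = r₀ * (1/2)^(j+1) := by rw [pow_succ]; ring
      refine ⟨(q1, q2), ⟨hq1A, hq2K, hnewres, hq1z⟩, ?_⟩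
      calc ‖(q1, q2).1 - p.1‖ ≤ C₁ * rj := hstepsize
        _ ≤ C₁ * (r₀ * (1/2)^j) := mul_le_mul_of_nonneg_left hrjr₀ (le_of_lt hC₁)
  -- construct the sequence
  have hInv0 : Inv 0 (z, k₀) := by
    refine ⟨hzA, hk₀K, ?_, ?_⟩
    · rw [← hr₀def]; norm_num
    · norm_num
  clear_value r₀
  let seq : ∀ j : ℕ, {p : E × Z // Inv j p} :=
    fun j => Nat.rec ⟨(z, k₀), hInv0⟩
      (fun j p => ⟨(hstep j p.1 p.2).choose, (hstep j p.1 p.2).choose_spec.1⟩) j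
  have hseqstep : ∀ j : ℕ, ‖(seq (j+1)).1.1 - (seq j).1.1‖ ≤ C₁ * (r₀ * (1/2)^j) :=
    fun j => (hstep j (seq j).1 (seq j).2).choose_spec.2
  have hcauchy : CauchySeq (fun j => (seq j).1.1) := by
    apply cauchySeq_of_le_geometric (1/2 : ℝ) (C₁ * r₀) (by norm_num)
    intro n
    rw [dist_eq_norm, norm_sub_rev]
    calc ‖(seq (n+1)).1.1 - (seq n).1.1‖ ≤ C₁ * (r₀ * (1/2)^n) := hseqstep n
      _ = (C₁ * r₀) * (1/2)^n := by ring
  obtain ⟨x, hx⟩ := cauchySeq_tendsto_of_complete hcauchy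
  have hxA' : x ∈ A := hAcl.mem_of_tendsto hx (Filter.Eventually.of_forall fun j => (seq j).2.1)
  have hres0 : Tendsto (fun j => G (seq j).1.1 - (seq j).1.2) atTop (𝓝 0) := by
    apply squeeze_zero_norm (fun j => (seq j).2.2.2.1)
    have h15 : Tendsto (fun j : ℕ => r₀ * (1/2)^j) atTop (𝓝 (r₀ * 0)) :=
      (tendsto_pow_atTop_nhds_zero_of_lt_one (by norm_num) (by norm_num)).const_mul r₀
    simpa using h15
  have hGx : Tendsto (fun j => G (seq j).1.1) atTop (𝓝 (G x)) :=
    ((hG.continuous).continuousAt.tendsto).comp hx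
  have hkx : Tendsto (fun j => (seq j).1.2) atTop (𝓝 (G x)) := by
    have h16 : (fun j => (seq j).1.2) = fun j => G (seq j).1.1 - (G (seq j).1.1 - (seq j).1.2) := by
      funext j; abel
    rw [h16]
    simpa using hGx.sub hres0
  have hGxK : G x ∈ K := hKcl.mem_of_tendsto hkx
    (Filter.Eventually.of_forall fun j => (seq j).2.2.1)
  have hxz : ‖x - z‖ ≤ 2*C₁*r₀ := by
    have hcl : IsClosed {w : E | ‖w - z‖ ≤ 2*C₁*r₀} :=
      isClosed_le ((continuous_id.sub continuous_const).norm) continuous_const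
    refine hcl.mem_of_tendsto hx (Filter.Eventually.of_forall fun j => ?_)
    have h1 : ((1:ℝ)/2)^j ≤ 1 := pow_le_one₀ (by norm_num) (by norm_num)
    have h2 : (0:ℝ) < (1/2:ℝ)^j := by positivity
    have h17 := (seq j).2.2.2.2
    simp only [Set.mem_setOf_eq]
    linarith [h17, mul_nonneg (mul_nonneg (by linarith : (0:ℝ) ≤ 2*C₁) hr₀0) h2.le]
  refine ⟨x, hxA', hGxK, ?_⟩
  have h18 : 2*C₁*r₀ ≤ 2*C₁*(2*β) :=
    mul_le_mul_of_nonneg_left hr₀β (by linarith : (0:ℝ) ≤ 2*C₁)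
  calc ‖x - z‖ ≤ 2*C₁*r₀ := hxz
    _ ≤ 4*C₁*β := by linarith

/-- For a convex set, tangent directions give o(t) distance estimates. -/
theorem contingentCone_infDist_le {Z : Type*} [NormedAddCommGroup Z] [NormedSpace ℝ Z]
    {K : Set Z} (hKconv : Convex ℝ K) {y₀ : Z} (hy₀ : y₀ ∈ K) {u : Z}
    (hu : u ∈ contingentCone K y₀) :
    ∀ ε > 0, ∃ s > 0, ∀ t : ℝ, 0 < t → t ≤ s → Metric.infDist (y₀ + t • u) K ≤ ε * t := by
  intro ε hε
  obtain ⟨a, v, hapos, ha0, hv, hmem⟩ := hu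
  have hvev : ∀ᶠ n in atTop, ‖v n - u‖ ≤ ε := by
    have := hv.sub_const u
    rw [show u - u = 0 by abel] at this
    have h2 := (this.norm.eventually (eventually_le_nhds (by simpa using hε)))
    simpa using h2
  obtain ⟨n, hn⟩ := hvev.exists
  refine ⟨a n, hapos n, fun t ht hts => ?_⟩
  have hk : y₀ + a n • v n ∈ K := hmem n
  have hconv : y₀ + t • v n ∈ K := by
    have hfrac0 : 0 ≤ t / a n := le_of_lt (div_pos ht (hapos n))
    have hfrac1 : t / a n ≤ 1 := by
      rw [div_le_one (hapos n)]; exact hts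
    have hcc := hKconv hy₀ hk (by linarith : (0:ℝ) ≤ 1 - t / a n) hfrac0 (by ring)
    have heq : (1 - t / a n) • y₀ + (t / a n) • (y₀ + a n • v n) = y₀ + t • v n := by
      have hcancel : (t / a n) * a n = t := div_mul_cancel₀ t (ne_of_gt (hapos n))
      rw [smul_add, smul_smul, hcancel]
      module
    rwa [heq] at hcc
  calc Metric.infDist (y₀ + t • u) K ≤ dist (y₀ + t • u) (y₀ + t • v n) :=
        Metric.infDist_le_dist_of_mem hconv
    _ = ‖t • u - t • v n‖ := by rw [dist_eq_norm]; congr 1; abel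
    _ = t * ‖u - v n‖ := by rw [← smul_sub, norm_smul, Real.norm_eq_abs, abs_of_pos ht]
    _ ≤ t * ε := mul_le_mul_of_nonneg_left (by rw [norm_sub_rev]; exact hn) (le_of_lt ht)
    _ = ε * t := mul_comm _ _

/-- Mean value theorem for scalar functions on ℝ^d along a segment, gradient form. -/
theorem exists_gradient_mvt {d : ℕ} (g : EuclideanSpace ℝ (Fin d) → ℝ)
    (hg : Differentiable ℝ g) (z u : EuclideanSpace ℝ (Fin d)) :
    ∃ θ ∈ Icc (0:ℝ) 1, g (z + u) - g z = ⟪gradient g (z + θ • u), u⟫ := by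
  have hfd : ∀ w : EuclideanSpace ℝ (Fin d), ⟪gradient g w, u⟫ = fderiv ℝ g w u := by
    intro w
    have h1 : HasGradientAt g (gradient g w) w := (hg w).hasGradientAt
    have h2 : HasFDerivAt g ((InnerProductSpace.toDual ℝ _) (gradient g w)) w :=
      hasGradientAt_iff_hasFDerivAt.1 h1
    rw [h2.fderiv]
    simp [InnerProductSpace.toDual_apply_apply]
  set φ : ℝ → ℝ := fun t => g (z + t • u) with hφ
  have hφd : ∀ t : ℝ, HasDerivAt φ (fderiv ℝ g (z + t • u) u) t := by
    intro t
    have hline : HasDerivAt (fun t : ℝ => z + t • u) u t := by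
      simpa using ((hasDerivAt_id t).smul_const u).const_add z
    have := (hg (z + t • u)).hasFDerivAt.comp_hasDerivAt t hline
    exact this
  obtain ⟨θ, hθ, hθeq⟩ := exists_hasDerivAt_eq_slope φ (fun t => fderiv ℝ g (z + t • u) u)
    one_pos (fun t _ => (hφd t).continuousAt.continuousWithinAt) (fun t _ => hφd t)
  refine ⟨θ, ⟨le_of_lt hθ.1, le_of_lt hθ.2⟩, ?_⟩
  rw [hfd, hθeq]
  simp [hφ]

theorem fmax_isGreatest' {d : ℕ} {W : Type*} [TopologicalSpace W] [CompactSpace W] [Nonempty W]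
    (f : EuclideanSpace ℝ (Fin d) → W → ℝ) (x : EuclideanSpace ℝ (Fin d))
    (hc : Continuous fun ω => f x ω) :
    ∃ ω₀, f x ω₀ = Fmax f x ∧ ∀ ω, f x ω ≤ f x ω₀ := by
  obtain ⟨ω₀, -, hmax⟩ := isCompact_univ.exists_isMaxOn univ_nonempty hc.continuousOn
  have hgr : IsGreatest (range fun ω => f x ω) (f x ω₀) := by
    constructor
    · exact mem_range_self _
    · rintro r ⟨ω, rfl⟩; exact hmax (mem_univ ω)
  exact ⟨ω₀, hgr.csSup_eq.symm, fun ω => hmax (mem_univ ω)⟩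

set_option maxHeartbeats 4000000 in
theorem linearised_problem_necessary_optimality
    {d : ℕ} {W : Type*} [TopologicalSpace W] [CompactSpace W] [T2Space W] [Nonempty W]
    {Y : Type*} [NormedAddCommGroup Y] [NormedSpace ℝ Y] [CompleteSpace Y]
    (A : Set (EuclideanSpace ℝ (Fin d))) (K : Set Y)
    (G : EuclideanSpace ℝ (Fin d) → Y) (f : EuclideanSpace ℝ (Fin d) → W → ℝ)
    (hAne : A.Nonempty) (hAcl : IsClosed A) (hAconv : Convex ℝ A)
    (hKne : K.Nonempty) (hKcl : IsClosed K) (hKconv : Convex ℝ K)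
    (hKcone : ∀ (c : ℝ), 0 ≤ c → ∀ y ∈ K, c • y ∈ K)
    (hG : ContDiff ℝ 1 G)
    (hfdiff : ∀ ω, Differentiable ℝ (fun x => f x ω))
    (hfc : Continuous fun p : EuclideanSpace ℝ (Fin d) × W => f p.1 p.2)
    (hfg : Continuous fun p : EuclideanSpace ℝ (Fin d) × W => gradient (fun z => f z p.2) p.1)
    (xs : EuclideanSpace ℝ (Fin d)) (hxA : xs ∈ A) (hxK : G xs ∈ K)
    (hopt : ∃ U ∈ 𝓝 xs, ∀ x ∈ U, x ∈ A → G x ∈ K → Fmax f xs ≤ Fmax f x)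
    (hRCQ : RobinsonCQ G K A xs) :
    ∀ h ∈ contingentCone A xs, fderiv ℝ G xs h ∈ contingentCone K (G xs) →
      0 ≤ Fdir f xs h := by
  classical
  intro h hhA hhKpre
  set T := fderiv ℝ G xs with hTdef
  have hint : (0:Y) ∈ interior {y | ∃ a ∈ A, ∃ k ∈ K, y = G xs + T (a - xs) - k} := hRCQ
  -- Stage 1: Robinson–Ursescu for the linearisation
  obtain ⟨c, hc, ρ, hρ, hsurj⟩ := stage1 A K hAcl hAconv hKcl hKconv T xs hxA (G xs) hxK hint
  -- Stage 2: Robinson's stability theorem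
  obtain ⟨c', hc', εR, hεR, hrob⟩ :=
    stage2 A K hAcl hAconv hKcl hKconv G hG xs hxA hxK c ρ hc hρ hsurj
  have hhK : T h ∈ contingentCone K (G xs) := hhKpre
  -- the tangent direction data
  obtain ⟨t, v, htpos, ht0, hv, hvA⟩ := hhA
  set z : ℕ → EuclideanSpace ℝ (Fin d) := fun n => xs + t n • v n with hzdef
  have hzA : ∀ n, z n ∈ A := hvA
  have htv0 : Tendsto (fun n => t n • v n) atTop (𝓝 0) := by
    have h1 := ht0.smul hv
    simpa using h1
  have hzxs : Tendsto z atTop (𝓝 xs) := by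
    have h1 := htv0.const_add xs
    simpa [hzdef] using h1
  have hvbound : ∀ᶠ n in atTop, ‖v n‖ ≤ ‖h‖ + 1 := by
    have h1 : Tendsto (fun n => ‖v n‖) atTop (𝓝 ‖h‖) := hv.norm
    exact (h1.eventually_lt_const (by linarith [norm_nonneg h] : ‖h‖ < ‖h‖ + 1)).mono
      fun n hn => le_of_lt hn
  have hh1 : (0:ℝ) < ‖h‖ + 1 := by positivity
  -- distance to K along the curve is o(t n)
  have hlittle : (fun w => G (xs + w) - G xs - T w)
      =o[𝓝 0] (fun w : EuclideanSpace ℝ (Fin d) => w) := by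
    rw [hTdef]
    exact hasFDerivAt_iff_isLittleO_nhds_zero.1 ((hG.differentiable one_ne_zero) xs).hasFDerivAt
  have hdistK : ∀ ε > 0, ∀ᶠ n in atTop, Metric.infDist (G (z n)) K ≤ ε * t n := by
    intro ε hε
    have hε3 : (0:ℝ) < ε/3 := by positivity
    have hε1 : (0:ℝ) < ε/(3*(‖h‖+1)) := by positivity
    have hev1 : ∀ᶠ n in atTop,
        ‖G (xs + t n • v n) - G xs - T (t n • v n)‖ ≤ (ε/(3*(‖h‖+1))) * ‖t n • v n‖ :=
      htv0.eventually (hlittle.def hε1)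
    have hev2 : ∀ᶠ n in atTop, ‖T‖ * ‖v n - h‖ ≤ ε/3 := by
      have h2 : Tendsto (fun n => ‖T‖ * ‖v n - h‖) atTop (𝓝 (‖T‖ * 0)) := by
        apply Tendsto.const_mul
        have h3 : Tendsto (fun n => v n - h) atTop (𝓝 (h - h)) := hv.sub_const h
        rw [sub_self] at h3
        simpa using h3.norm
      rw [mul_zero] at h2
      exact (h2.eventually_lt_const hε3).mono fun n hn => le_of_lt hn
    obtain ⟨s, hs, htks⟩ := contingentCone_infDist_le hKconv hxK hhK (ε/3) hε3
    have hev3 : ∀ᶠ n in atTop, t n ≤ s :=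
      (ht0.eventually_lt_const hs).mono fun n hn => le_of_lt hn
    filter_upwards [hev1, hev2, hev3, hvbound] with n h1 h2 h3 h4
    have htn : 0 < t n := htpos n
    have hb3 : Metric.infDist (G xs + t n • T h) K ≤ (ε/3) * t n := htks (t n) htn h3
    have hb1 : ‖G (xs + t n • v n) - G xs - T (t n • v n)‖ ≤ (ε/3) * t n := by
      have hsm : ‖t n • v n‖ ≤ t n * (‖h‖ + 1) := by
        rw [norm_smul, Real.norm_eq_abs, abs_of_pos htn]
        exact mul_le_mul_of_nonneg_left h4 (le_of_lt htn)
      have heq : (ε/(3*(‖h‖+1))) * (t n * (‖h‖ + 1)) = (ε/3) * t n := by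
        field_simp
      calc ‖G (xs + t n • v n) - G xs - T (t n • v n)‖
          ≤ (ε/(3*(‖h‖+1))) * ‖t n • v n‖ := h1
        _ ≤ (ε/(3*(‖h‖+1))) * (t n * (‖h‖ + 1)) :=
            mul_le_mul_of_nonneg_left hsm (le_of_lt hε1)
        _ = (ε/3) * t n := heq
    have hb2 : ‖T (t n • v n) - t n • T h‖ ≤ (ε/3) * t n := by
      have heq2 : T (t n • v n) - t n • T h = t n • T (v n - h) := by
        rw [map_smul, map_sub, smul_sub]
      rw [heq2, norm_smul, Real.norm_eq_abs, abs_of_pos htn]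
      calc t n * ‖T (v n - h)‖ ≤ t n * (‖T‖ * ‖v n - h‖) :=
            mul_le_mul_of_nonneg_left (T.le_opNorm _) (le_of_lt htn)
        _ ≤ t n * (ε/3) := mul_le_mul_of_nonneg_left h2 (le_of_lt htn)
        _ = (ε/3) * t n := mul_comm _ _
    have htri : dist (G (z n)) (G xs + t n • T h) ≤ (ε/3) * t n + (ε/3) * t n := by
      rw [dist_eq_norm]
      calc ‖G (z n) - (G xs + t n • T h)‖
          = ‖(G (xs + t n • v n) - G xs - T (t n • v n)) + (T (t n • v n) - t n • T h)‖ := by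
            rw [hzdef]; congr 1; abel
        _ ≤ ‖G (xs + t n • v n) - G xs - T (t n • v n)‖ + ‖T (t n • v n) - t n • T h‖ :=
            norm_add_le _ _
        _ ≤ (ε/3) * t n + (ε/3) * t n := add_le_add hb1 hb2
    calc Metric.infDist (G (z n)) K
        ≤ Metric.infDist (G xs + t n • T h) K + dist (G (z n)) (G xs + t n • T h) :=
          Metric.infDist_le_infDist_add_dist
      _ ≤ (ε/3) * t n + ((ε/3) * t n + (ε/3) * t n) := add_le_add hb3 htri
      _ = ε * t n := by ring
  -- Robinson correction : find genuinely feasible points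
  have hrobev : ∀ᶠ n in atTop, ∃ x, x ∈ A ∧ G x ∈ K ∧
      ‖x - z n‖ ≤ c' * Metric.infDist (G (z n)) K := by
    have hev1 : ∀ᶠ n in atTop, ‖z n - xs‖ ≤ εR := by
      have h1 : Tendsto (fun n => ‖z n - xs‖) atTop (𝓝 0) := by
        have h2 : Tendsto (fun n => z n - xs) atTop (𝓝 0) := by
          simpa [hzdef] using htv0
        simpa using h2.norm
      exact (h1.eventually_lt_const hεR).mono fun n hn => le_of_lt hn
    have hev2 : ∀ᶠ n in atTop, Metric.infDist (G (z n)) K ≤ εR := by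
      have h1 := hdistK 1 one_pos
      have h2 : ∀ᶠ n in atTop, t n ≤ εR :=
        (ht0.eventually_lt_const hεR).mono fun n hn => le_of_lt hn
      filter_upwards [h1, h2] with n h1 h2
      calc Metric.infDist (G (z n)) K ≤ 1 * t n := h1
        _ ≤ εR := by linarith
    filter_upwards [hev1, hev2] with n h1 h2
    obtain ⟨x, hx1, hx2, hx3⟩ := hrob (z n) (hzA n) h1 h2
    exact ⟨x, hx1, hx2, hx3⟩
  set P : ℕ → Prop := fun n => ∃ x, x ∈ A ∧ G x ∈ K ∧
      ‖x - z n‖ ≤ c' * Metric.infDist (G (z n)) K with hPdef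
  set x : ℕ → EuclideanSpace ℝ (Fin d) := fun n =>
    if hn : P n then hn.choose else z n with hxdef
  have hxP : ∀ᶠ n in atTop, x n ∈ A ∧ G (x n) ∈ K ∧
      ‖x n - z n‖ ≤ c' * Metric.infDist (G (z n)) K := by
    filter_upwards [hrobev] with n hn
    have hp : P n := hn
    simp only [hxdef, dif_pos hp]
    exact hp.choose_spec
  -- the correction is o(t n)
  have hcorr : ∀ ε > 0, ∀ᶠ n in atTop, ‖x n - z n‖ ≤ ε * t n := by
    intro ε hε
    have hε' : (0:ℝ) < ε/(c'+1) := by positivity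
    filter_upwards [hxP, hdistK (ε/(c'+1)) hε'] with n h1 h2
    have htn : (0:ℝ) < t n := htpos n
    calc ‖x n - z n‖ ≤ c' * Metric.infDist (G (z n)) K := h1.2.2
      _ ≤ c' * ((ε/(c'+1)) * t n) := mul_le_mul_of_nonneg_left h2 (le_of_lt hc')
      _ ≤ ε * t n := by
          rw [← mul_assoc]
          apply mul_le_mul_of_nonneg_right _ (le_of_lt htn)
          rw [mul_div_assoc', div_le_iff₀ (by positivity : (0:ℝ) < c'+1)]
          nlinarith
  have hcorr0 : Tendsto (fun n => x n - z n) atTop (𝓝 0) := by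
    apply squeeze_zero_norm' ((hcorr 1 one_pos).mono fun n hn => by simpa using hn) ht0
  have hxxs : Tendsto x atTop (𝓝 xs) := by
    have h1 : (fun n => z n + (x n - z n)) = x := by funext n; abel
    have h2 := hzxs.add hcorr0
    rw [h1] at h2
    simpa using h2
  -- the corrected directions
  set v' : ℕ → EuclideanSpace ℝ (Fin d) := fun n => v n + (t n)⁻¹ • (x n - z n) with hv'def
  have hxeq : ∀ n, x n = xs + t n • v' n := by
    intro n
    simp only [hv'def]
    rw [smul_add, smul_smul, mul_inv_cancel₀ (htpos n).ne', one_smul]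
    simp only [hzdef]
    abel
  have hv'corr : Tendsto (fun n => (t n)⁻¹ • (x n - z n)) atTop (𝓝 0) := by
    rw [NormedAddCommGroup.tendsto_nhds_zero]
    intro ε hε
    filter_upwards [hcorr (ε/2) (by positivity)] with n hn
    have htn : (0:ℝ) < t n := htpos n
    have h1 : ‖(t n)⁻¹ • (x n - z n)‖ = (t n)⁻¹ * ‖x n - z n‖ := by
      rw [norm_smul, Real.norm_eq_abs, abs_of_pos (inv_pos.2 htn)]
    rw [h1]
    calc (t n)⁻¹ * ‖x n - z n‖ ≤ (t n)⁻¹ * ((ε/2) * t n) :=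
          mul_le_mul_of_nonneg_left hn (inv_pos.2 htn).le
      _ = ε/2 := by field_simp
      _ < ε := by linarith
  have hv' : Tendsto v' atTop (𝓝 h) := by
    have h1 := hv.add hv'corr
    rw [add_zero] at h1
    exact h1
  have hv'bound : ∀ᶠ n in atTop, ‖v' n‖ ≤ ‖h‖ + 1 := by
    have h1 : Tendsto (fun n => ‖v' n‖) atTop (𝓝 ‖h‖) := hv'.norm
    exact (h1.eventually_lt_const (by linarith [norm_nonneg h] : ‖h‖ < ‖h‖ + 1)).mono
      fun n hn => le_of_lt hn
  -- gradient bound near xs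
  obtain ⟨M, hM⟩ : ∃ M, ∀ p ∈ Metric.closedBall xs 1 ×ˢ (univ : Set W),
      ‖gradient (fun zz => f zz p.2) p.1‖ ≤ M := by
    have hcpt : IsCompact (Metric.closedBall xs 1 ×ˢ (univ : Set W)) :=
      (isCompact_closedBall xs 1).prod isCompact_univ
    obtain ⟨M, hM⟩ := hcpt.exists_bound_of_continuousOn hfg.continuousOn
    exact ⟨M, hM⟩
  have hM0 : 0 ≤ M := by
    have h1 := hM (xs, Classical.arbitrary W)
      ⟨Metric.mem_closedBall_self zero_le_one, mem_univ _⟩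
    exact le_trans (norm_nonneg _) h1
  -- maximizers
  have hfxcont : ∀ x' : EuclideanSpace ℝ (Fin d), Continuous fun w : W => f x' w :=
    fun x' => hfc.comp (continuous_const.prodMk continuous_id)
  have hmax : ∀ x' : EuclideanSpace ℝ (Fin d),
      ∃ ω₀, f x' ω₀ = Fmax f x' ∧ ∀ ω', f x' ω' ≤ f x' ω₀ :=
    fun x' => fmax_isGreatest' f x' (hfxcont x')
  have hle : ∀ x' ω', f x' ω' ≤ Fmax f x' := by
    intro x' ω'
    obtain ⟨ω₀, he, hb⟩ := hmax x'
    rw [← he]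
    exact hb ω'
  set ω : ℕ → W := fun n => (hmax (x n)).choose with hωdef
  have hωe : ∀ n, f (x n) (ω n) = Fmax f (x n) := fun n => (hmax (x n)).choose_spec.1
  -- mean value theorem data
  have hmvt : ∀ n, ∃ θ ∈ Icc (0:ℝ) 1, f (xs + t n • v' n) (ω n) - f xs (ω n) =
      ⟪gradient (fun zz => f zz (ω n)) (xs + θ • (t n • v' n)), t n • v' n⟫ :=
    fun n => exists_gradient_mvt (fun zz => f zz (ω n)) (hfdiff (ω n)) xs (t n • v' n)
  set θ : ℕ → ℝ := fun n => (hmvt n).choose with hθdef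
  set ξ : ℕ → EuclideanSpace ℝ (Fin d) := fun n => xs + θ n • (t n • v' n) with hξdef
  have hθmem : ∀ n, θ n ∈ Icc (0:ℝ) 1 := fun n => (hmvt n).choose_spec.1
  have hmvteq : ∀ n, f (xs + t n • v' n) (ω n) - f xs (ω n) =
      ⟪gradient (fun zz => f zz (ω n)) (ξ n), t n • v' n⟫ := fun n => (hmvt n).choose_spec.2
  set cseq : ℕ → ℝ := fun n => ⟪gradient (fun zz => f zz (ω n)) (ξ n), v' n⟫ with hcseqdef
  have hmvteq' : ∀ n, f (x n) (ω n) - f xs (ω n) = t n * cseq n := by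
    intro n
    rw [hxeq n, hmvteq n, real_inner_smul_right]
  -- ξ tends to xs
  have hξb : ∀ᶠ n in atTop, ‖ξ n - xs‖ ≤ t n * (‖h‖ + 1) := by
    filter_upwards [hv'bound] with n hn
    have h1 : ξ n - xs = θ n • (t n • v' n) := by simp only [hξdef]; abel
    rw [h1, norm_smul, norm_smul, Real.norm_eq_abs, Real.norm_eq_abs,
      abs_of_nonneg (hθmem n).1, abs_of_pos (htpos n)]
    calc θ n * (t n * ‖v' n‖) ≤ 1 * (t n * ‖v' n‖) :=
          mul_le_mul_of_nonneg_right (hθmem n).2 (mul_nonneg (htpos n).le (norm_nonneg _))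
      _ = t n * ‖v' n‖ := one_mul _
      _ ≤ t n * (‖h‖ + 1) := mul_le_mul_of_nonneg_left hn (htpos n).le
  have hξxs : Tendsto ξ atTop (𝓝 xs) := by
    have h1 : Tendsto (fun n => ξ n - xs) atTop (𝓝 0) := by
      apply squeeze_zero_norm' hξb
      have h2 := ht0.mul_const (‖h‖ + 1)
      simpa using h2
    have h3 := h1.const_add xs
    simp only [add_zero] at h3
    have h4 : (fun n => xs + (ξ n - xs)) = ξ := by funext n; abel
    rwa [h4] at h3
  -- local optimality kicks in
  have hUev : ∀ᶠ n in atTop, Fmax f xs ≤ Fmax f (x n) := by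
    obtain ⟨U, hU, hUopt⟩ := hopt
    filter_upwards [hxxs.eventually_mem hU, hxP] with n h1 h2
    exact hUopt _ h1 h2.1 h2.2.1
  have hcnonneg : ∀ᶠ n in atTop, cseq n ∈ Ici (0:ℝ) := by
    filter_upwards [hUev] with n h1
    have h2 : 0 ≤ t n * cseq n := by
      rw [← hmvteq' n]
      have h3 := hle xs (ω n)
      have h4 := hωe n
      linarith
    have h5 := div_nonneg h2 (htpos n).le
    rwa [mul_div_cancel_left₀ _ (htpos n).ne'] at h5
  -- bound on cseq
  have hξball : ∀ᶠ n in atTop, ξ n ∈ Metric.closedBall xs 1 := by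
    have hev : ∀ᶠ n in atTop, t n * (‖h‖ + 1) ≤ 1 := by
      have h1 := ht0.mul_const (‖h‖ + 1)
      rw [zero_mul] at h1
      exact (h1.eventually_lt_const one_pos).mono fun n hn => le_of_lt hn
    filter_upwards [hξb, hev] with n h1 h2
    rw [Metric.mem_closedBall, dist_eq_norm]
    linarith
  have hcb : ∀ᶠ n in atTop, |cseq n| ≤ M * (‖h‖ + 1) := by
    filter_upwards [hξball, hv'bound] with n h1 h2
    calc |cseq n| ≤ ‖gradient (fun zz => f zz (ω n)) (ξ n)‖ * ‖v' n‖ :=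
          abs_real_inner_le_norm _ _
      _ ≤ M * (‖h‖ + 1) :=
          mul_le_mul (hM (ξ n, ω n) ⟨h1, mem_univ _⟩) h2 (norm_nonneg _) hM0
  -- f xs (ω n) → Fmax f xs
  have hfωlim : Tendsto (fun n => f xs (ω n)) atTop (𝓝 (Fmax f xs)) := by
    have hlow : ∀ᶠ n in atTop, Fmax f xs - t n * (M * (‖h‖ + 1)) ≤ f xs (ω n) := by
      filter_upwards [hUev, hcb] with n h1 h2
      have h3 := hmvteq' n
      have h4 := hωe n
      have h5 : t n * cseq n ≤ t n * (M * (‖h‖ + 1)) :=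
        mul_le_mul_of_nonneg_left (le_trans (le_abs_self _) h2) (htpos n).le
      linarith
    have hup : ∀ᶠ n in atTop, f xs (ω n) ≤ Fmax f xs :=
      Eventually.of_forall fun n => hle xs (ω n)
    have hlowlim : Tendsto (fun n => Fmax f xs - t n * (M * (‖h‖ + 1))) atTop
        (𝓝 (Fmax f xs)) := by
      have h1 := ht0.mul_const (M * (‖h‖ + 1))
      rw [zero_mul] at h1
      have h2 := (tendsto_const_nhds (x := Fmax f xs) (f := atTop)).sub h1
      simpa using h2
    exact tendsto_of_tendsto_of_tendsto_of_le_of_le' hlowlim tendsto_const_nhds hlow hup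
  -- extract a cluster point of the maximizers
  obtain ⟨ωbar, -, hclω⟩ :=
    isCompact_univ.exists_mapClusterPt (f := atTop) (u := ω) (le_principal_iff.mpr univ_mem)
  have hωactive : f xs ωbar = Fmax f xs := by
    have h1 : MapClusterPt (f xs ωbar) atTop ((fun w => f xs w) ∘ ω) :=
      hclω.continuousAt_comp (hfxcont xs).continuousAt
    exact mapClusterPt_eq_of_tendsto' h1 hfωlim
  have hpair : Tendsto (fun n => (ξ n, v' n)) atTop (𝓝 (xs, h)) := hξxs.prodMk_nhds hv'
  have htrip := hclω.prod_tendsto' hpair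
  have hΦcont : Continuous fun p : W × (EuclideanSpace ℝ (Fin d) × EuclideanSpace ℝ (Fin d)) =>
      ⟪gradient (fun zz => f zz p.1) p.2.1, p.2.2⟫ := by
    apply Continuous.inner
    · exact hfg.comp ((continuous_snd.fst).prodMk continuous_fst)
    · exact continuous_snd.snd
  have hclc : MapClusterPt (⟪gradient (fun zz => f zz ωbar) xs, h⟫) atTop cseq :=
    htrip.continuousAt_comp hΦcont.continuousAt
  have hge : (0:ℝ) ≤ ⟪gradient (fun zz => f zz ωbar) xs, h⟫ :=
    mapClusterPt_mem_of_eventually' hclc isClosed_Ici hcnonneg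
  -- conclude
  have hmem : ⟪gradient (fun zz => f zz ωbar) xs, h⟫ ∈ (fun u => ⟪u, h⟫) '' activeGrads f xs :=
    ⟨gradient (fun zz => f zz ωbar) xs, ⟨ωbar, hωactive, rfl⟩, rfl⟩
  have hbdd : BddAbove ((fun u => ⟪u, h⟫) '' activeGrads f xs) := by
    have hsub : (fun u => ⟪u, h⟫) '' activeGrads f xs ⊆
        (fun w : W => ⟪gradient (fun zz => f zz w) xs, h⟫) '' (univ : Set W) := by
      rintro r ⟨g, ⟨w, hw, rfl⟩, rfl⟩
      exact ⟨w, mem_univ w, rfl⟩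
    apply BddAbove.mono hsub
    apply IsCompact.bddAbove
    apply isCompact_univ.image
    apply Continuous.inner
    · exact hfg.comp (continuous_const.prodMk continuous_id)
    · exact continuous_const
  calc (0:ℝ) ≤ ⟪gradient (fun zz => f zz ωbar) xs, h⟫ := hge
    _ ≤ Fdir f xs h := le_csSup hbdd hmem
end
end

section
/- Let x* be a feasible point of the problem (P). If max_{ω∈W(x*)} ⟨∇ₓf(x*,ω), h⟩ > 0 for every h ∈ T_A(x*)\{0} with DG(x*)h ∈ T_K(G(x*)), then the first order growth condition holds at x*. Conversely, if the first order growth condition and RCQ hold at x*, then this strict inequality holds for every such h ≠ 0. -/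
open Set Filter Topology Pointwise
open scoped RealInnerProductSpace

noncomputable section

variable {d : ℕ} {W : Type*} [TopologicalSpace W]
variable {Y : Type*} [NormedAddCommGroup Y] [NormedSpace ℝ Y]

set_option linter.unusedVariables false
set_option linter.unusedSectionVars false
set_option maxHeartbeats 1000000

section auxLemmas

lemma hadamard_quotient {E F : Type*} [NormedAddCommGroup E] [NormedSpace ℝ E]
    [NormedAddCommGroup F] [NormedSpace ℝ F] {g : E → F} {x : E}
    (hg : DifferentiableAt ℝ g x)
    {a : ℕ → ℝ} {v : ℕ → E} {h : E} (ha : ∀ n, 0 < a n)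
    (ha0 : Tendsto a atTop (𝓝 0)) (hv : Tendsto v atTop (𝓝 h)) :
    Tendsto (fun n => (a n)⁻¹ • (g (x + a n • v n) - g x)) atTop
      (𝓝 (fderiv ℝ g x h)) := by
  set T := fderiv ℝ g x with hT
  have hxn : Tendsto (fun n => x + a n • v n) atTop (𝓝 x) := by
    have : Tendsto (fun n => a n • v n) atTop (𝓝 ((0:ℝ) • h)) := ha0.smul hv
    rw [zero_smul] at this
    simpa using tendsto_const_nhds.add this
  have hrem : Tendsto
      (fun n => (a n)⁻¹ • (g (x + a n • v n) - g x - T ((x + a n • v n) - x)))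
      atTop (𝓝 0) := by
    rw [NormedAddCommGroup.tendsto_nhds_zero]
    intro ε hε
    have hlo := hg.hasFDerivAt.isLittleO
    have hvbd : ∀ᶠ n in atTop, ‖v n‖ < ‖h‖ + 1 := by
      have : Tendsto (fun n => ‖v n‖) atTop (𝓝 ‖h‖) := hv.norm
      exact this.eventually (eventually_lt_nhds (by linarith [norm_nonneg h]))
    have hc : (0:ℝ) < ε / (2 * (‖h‖ + 1)) := by positivity
    have hev := hxn.eventually (hlo.def hc)
    filter_upwards [hev, hvbd] with n h1 h2
    have han : a n ≠ 0 := (ha n).ne'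
    have hnorm : ‖(x + a n • v n) - x‖ = a n * ‖v n‖ := by
      simp [norm_smul, abs_of_pos (ha n)]
    rw [norm_smul, norm_inv, Real.norm_eq_abs, abs_of_pos (ha n)]
    calc (a n)⁻¹ * ‖g (x + a n • v n) - g x - T ((x + a n • v n) - x)‖
        ≤ (a n)⁻¹ * (ε / (2 * (‖h‖ + 1)) * (a n * ‖v n‖)) := by
          rw [hnorm] at h1
          exact mul_le_mul_of_nonneg_left h1 (inv_nonneg.mpr (ha n).le)
      _ = ε / (2 * (‖h‖ + 1)) * ‖v n‖ := by field_simp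
      _ < ε := by
          have hh : (0:ℝ) < ‖h‖ + 1 := by linarith [norm_nonneg h]
          have h2' : ‖v n‖ ≤ ‖h‖ + 1 := le_of_lt h2
          have : ε / (2 * (‖h‖ + 1)) * ‖v n‖ ≤ ε / (2 * (‖h‖ + 1)) * (‖h‖ + 1) :=
            mul_le_mul_of_nonneg_left h2' (by positivity)
          calc ε / (2 * (‖h‖ + 1)) * ‖v n‖ ≤ ε / (2 * (‖h‖ + 1)) * (‖h‖ + 1) := this
            _ = ε / 2 := by field_simp
            _ < ε := by linarith
  have hTv : Tendsto (fun n => T (v n)) atTop (𝓝 (T h)) :=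
    (T.continuous.tendsto h).comp hv
  have key : ∀ n, (a n)⁻¹ • (g (x + a n • v n) - g x)
      = T (v n) + (a n)⁻¹ • (g (x + a n • v n) - g x - T ((x + a n • v n) - x)) := by
    intro n
    have han : a n ≠ 0 := (ha n).ne'
    have : T ((x + a n • v n) - x) = a n • T (v n) := by
      rw [add_sub_cancel_left, map_smul]
    rw [this]
    rw [smul_sub, smul_sub, smul_smul, inv_mul_cancel₀ han, one_smul]
    module
  simp_rw [key]
  simpa using hTv.add hrem

lemma bounded_RCQ {Y : Type*} [NormedAddCommGroup Y] [NormedSpace ℝ Y] [CompleteSpace Y]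
    (A : Set (EuclideanSpace ℝ (Fin d))) (K : Set Y)
    (G : EuclideanSpace ℝ (Fin d) → Y)
    (hAcl : IsClosed A) (hAconv : Convex ℝ A) (hKcl : IsClosed K) (hKconv : Convex ℝ K)
    (xs : EuclideanSpace ℝ (Fin d)) (hxA : xs ∈ A) (hxK : G xs ∈ K)
    (hRCQ : RobinsonCQ G K A xs) :
    ∃ ε' > (0:ℝ), ∃ N > (0:ℝ), ∀ u : Y, ‖u‖ ≤ ε' →
      ∃ a ∈ A, ‖a - xs‖ ≤ N ∧ ∃ k ∈ K, G xs + fderiv ℝ G xs (a - xs) - k = u := by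
  classical
  set T := fderiv ℝ G xs with hTdef
  set S : Set Y := {y | ∃ a ∈ A, ∃ k ∈ K, y = G xs + T (a - xs) - k} with hSdef
  set Sn : ℕ → Set Y := fun n =>
    {y | ∃ a, (a ∈ A ∧ ‖a - xs‖ ≤ (n:ℝ)) ∧ ∃ k, (k ∈ K ∧ ‖k‖ ≤ (n:ℝ)) ∧
      y = G xs + T (a - xs) - k} with hSndef
  have hSn_sub : ∀ n, Sn n ⊆ S := by
    rintro n y ⟨a, ⟨haA, -⟩, k, ⟨hkK, -⟩, hy⟩
    exact ⟨a, haA, k, hkK, hy⟩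
  have hS_cover : ∀ y ∈ S, ∃ n : ℕ, y ∈ Sn n := by
    rintro y ⟨a, haA, k, hkK, hy⟩
    obtain ⟨n, hn⟩ := exists_nat_ge (max ‖a - xs‖ ‖k‖)
    exact ⟨n, a, ⟨haA, le_trans (le_max_left _ _) hn⟩, k,
      ⟨hkK, le_trans (le_max_right _ _) hn⟩, hy⟩
  have hSn_closed : ∀ n, IsClosed (Sn n) := by
    intro n
    have hC : IsCompact ((fun a => G xs + T (a - xs)) '' (A ∩ Metric.closedBall xs n)) := by
      refine IsCompact.image ?_ ?_
      · exact (isCompact_closedBall xs n).inter_left hAcl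
      · exact continuous_const.add (T.continuous.comp (continuous_id.sub continuous_const))
    have hD : IsClosed (-(K ∩ Metric.closedBall (0:Y) n)) :=
      (hKcl.inter Metric.isClosed_closedBall).neg
    have heq : Sn n = ((fun a => G xs + T (a - xs)) '' (A ∩ Metric.closedBall xs n))
        + (-(K ∩ Metric.closedBall (0:Y) n)) := by
      ext y
      constructor
      · rintro ⟨a, ⟨haA, han⟩, k, ⟨hkK, hkn⟩, hy⟩
        have hy' : y = (G xs + T (a - xs)) + (-k) := by rw [hy]; abel
        rw [hy']
        exact Set.add_mem_add
          ⟨a, ⟨haA, by simpa [Metric.mem_closedBall, dist_eq_norm] using han⟩, rfl⟩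
          (Set.neg_mem_neg.mpr ⟨hkK, by simpa [Metric.mem_closedBall, dist_eq_norm] using hkn⟩)
      · rintro ⟨c, ⟨a, ⟨haA, han⟩, rfl⟩, e, he, rfl⟩
        rw [Set.mem_neg] at he
        refine ⟨a, ⟨haA, by simpa [Metric.mem_closedBall, dist_eq_norm] using han⟩,
          -e, ⟨he.1, by simpa [Metric.mem_closedBall, dist_eq_norm] using he.2⟩, ?_⟩
        simp only [sub_neg_eq_add]
    rw [heq]
    exact hD.add_left_of_isCompact hC
  -- radius r2 with closedBall 0 r2 ⊆ S
  obtain ⟨r, hr, hrS⟩ : ∃ r > (0:ℝ), Metric.ball (0:Y) r ⊆ S := by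
    have := mem_interior_iff_mem_nhds.1 hRCQ
    rcases Metric.mem_nhds_iff.1 this with ⟨r, hr, hball⟩
    exact ⟨r, hr, hball⟩
  set r2 := r / 2 with hr2def
  have hr2 : 0 < r2 := by positivity
  have hr2S : Metric.closedBall (0:Y) r2 ⊆ S := by
    intro z hz
    apply hrS
    rw [Metric.mem_ball]
    rw [Metric.mem_closedBall] at hz
    linarith
  -- Baire on the subtype
  haveI : CompleteSpace (Metric.closedBall (0:Y) r2) :=
    Metric.isClosed_closedBall.completeSpace_coe
  haveI : Nonempty (Metric.closedBall (0:Y) r2) :=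
    ⟨⟨0, Metric.mem_closedBall_self hr2.le⟩⟩
  have hbaire : ∃ n : ℕ, (interior (Subtype.val ⁻¹' Sn n : Set (Metric.closedBall (0:Y) r2))).Nonempty := by
    apply nonempty_interior_of_iUnion_of_closed
    · intro n; exact (hSn_closed n).preimage continuous_subtype_val
    · ext z
      simp only [Set.mem_iUnion, Set.mem_preimage, Set.mem_univ, iff_true]
      exact hS_cover _ (hr2S z.2)
  obtain ⟨n₀, yy0, hy₀int⟩ := hbaire
  obtain ⟨ε, hε, hεball⟩ := Metric.mem_nhds_iff.1 (mem_interior_iff_mem_nhds.1 hy₀int)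
  set y₀ : Y := (yy0 : Y) with hy₀def
  have hy₀r : ‖y₀‖ ≤ r2 := by
    have := yy0.2; rwa [Metric.mem_closedBall, dist_zero_right] at this
  have hball0 : ∀ z : Y, z ∈ Metric.closedBall (0:Y) r2 → dist z y₀ < ε → z ∈ Sn n₀ := by
    intro z hz hdz
    have : (⟨z, hz⟩ : Metric.closedBall (0:Y) r2) ∈ Metric.ball yy0 ε := by
      rw [Metric.mem_ball, Subtype.dist_eq]
      exact hdz
    exact hεball this
  -- a genuine ball inside Sn n₀
  set δ : ℝ := min (1/2) (ε / (2 * r2 + 1)) with hδdef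
  have hδpos : 0 < δ := lt_min (by norm_num) (by positivity)
  have hδle : δ ≤ 1/2 := min_le_left _ _
  set y₂ : Y := (1 - δ) • y₀ with hy₂def
  set ρ₂ : ℝ := min (ε / 2) (δ * r2) with hρ₂def
  have hρ₂pos : 0 < ρ₂ := lt_min (by positivity) (by positivity)
  have hy₂r : ‖y₂‖ ≤ (1 - δ) * r2 := by
    rw [hy₂def, norm_smul, Real.norm_eq_abs, abs_of_nonneg (by linarith)]
    exact mul_le_mul_of_nonneg_left hy₀r (by linarith)
  have hδr2 : δ * r2 ≤ ε / 2 := by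
    have h1 : δ ≤ ε / (2 * r2 + 1) := min_le_right _ _
    have h2 : δ * r2 ≤ ε / (2 * r2 + 1) * r2 := mul_le_mul_of_nonneg_right h1 hr2.le
    have h3 : ε / (2 * r2 + 1) * r2 ≤ ε / 2 := by
      rw [div_mul_eq_mul_div, div_le_div_iff₀ (by positivity) (by norm_num)]
      nlinarith
    linarith
  have hball2 : ∀ z : Y, dist z y₂ < ρ₂ → z ∈ Sn n₀ := by
    intro z hz
    have hzy₀ : dist z y₀ < ε := by
      have h1 : dist y₂ y₀ = δ * ‖y₀‖ := by
        rw [dist_eq_norm, hy₂def]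
        have : (1 - δ) • y₀ - y₀ = (-δ) • y₀ := by module
        rw [this, norm_smul, Real.norm_eq_abs, abs_neg, abs_of_pos hδpos]
      have h2 : dist z y₀ ≤ dist z y₂ + dist y₂ y₀ := dist_triangle _ _ _
      have h3 : ρ₂ ≤ ε / 2 := min_le_left _ _
      have h4 : δ * ‖y₀‖ ≤ δ * r2 := mul_le_mul_of_nonneg_left hy₀r hδpos.le
      linarith
    have hzr : z ∈ Metric.closedBall (0:Y) r2 := by
      rw [Metric.mem_closedBall, dist_zero_right]
      have h1 : ‖z‖ ≤ dist z y₂ + ‖y₂‖ := by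
        rw [dist_eq_norm]
        calc ‖z‖ = ‖(z - y₂) + y₂‖ := by congr 1; abel
          _ ≤ ‖z - y₂‖ + ‖y₂‖ := norm_add_le _ _
      have h2 : ρ₂ ≤ δ * r2 := min_le_right _ _
      nlinarith
    exact hball0 z hzr hzy₀
  -- convex combinations of the Sn
  have hcomb : ∀ (μ : ℝ), 0 ≤ μ → μ ≤ 1 → ∀ (n m : ℕ), ∀ y1 ∈ Sn n, ∀ y2 ∈ Sn m,
      μ • y1 + (1 - μ) • y2 ∈ Sn (n + m) := by
    rintro μ hμ0 hμ1 n m y1 ⟨a1, ⟨ha1, ha1n⟩, k1, ⟨hk1, hk1n⟩, rfl⟩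
      y2 ⟨a2, ⟨ha2, ha2n⟩, k2, ⟨hk2, hk2n⟩, rfl⟩
    refine ⟨μ • a1 + (1 - μ) • a2, ⟨hAconv ha1 ha2 hμ0 (by linarith) (by ring), ?_⟩,
      μ • k1 + (1 - μ) • k2, ⟨hKconv hk1 hk2 hμ0 (by linarith) (by ring), ?_⟩, ?_⟩
    · have : μ • a1 + (1 - μ) • a2 - xs = μ • (a1 - xs) + (1 - μ) • (a2 - xs) := by module
      rw [this]
      calc ‖μ • (a1 - xs) + (1 - μ) • (a2 - xs)‖
          ≤ ‖μ • (a1 - xs)‖ + ‖(1 - μ) • (a2 - xs)‖ := norm_add_le _ _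
        _ = μ * ‖a1 - xs‖ + (1 - μ) * ‖a2 - xs‖ := by
            rw [norm_smul, norm_smul, Real.norm_eq_abs, Real.norm_eq_abs,
              abs_of_nonneg hμ0, abs_of_nonneg (by linarith)]
        _ ≤ μ * n + (1 - μ) * m := by
            have := mul_le_mul_of_nonneg_left ha1n hμ0
            have := mul_le_mul_of_nonneg_left ha2n (by linarith : (0:ℝ) ≤ 1 - μ)
            linarith
        _ ≤ ((n + m : ℕ) : ℝ) := by
            push_cast
            nlinarith [Nat.cast_nonneg (α := ℝ) n, Nat.cast_nonneg (α := ℝ) m]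
    · calc ‖μ • k1 + (1 - μ) • k2‖ ≤ ‖μ • k1‖ + ‖(1 - μ) • k2‖ := norm_add_le _ _
        _ = μ * ‖k1‖ + (1 - μ) * ‖k2‖ := by
            rw [norm_smul, norm_smul, Real.norm_eq_abs, Real.norm_eq_abs,
              abs_of_nonneg hμ0, abs_of_nonneg (by linarith)]
        _ ≤ ((n + m : ℕ) : ℝ) := by
            have := mul_le_mul_of_nonneg_left hk1n hμ0
            have := mul_le_mul_of_nonneg_left hk2n (by linarith : (0:ℝ) ≤ 1 - μ)
            push_cast
            nlinarith [Nat.cast_nonneg (α := ℝ) n, Nat.cast_nonneg (α := ℝ) m]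
    · have h1 : T (μ • a1 + (1 - μ) • a2 - xs) = μ • T (a1 - xs) + (1-μ) • T (a2 - xs) := by
        rw [show μ • a1 + (1 - μ) • a2 - xs = μ • (a1 - xs) + (1 - μ) • (a2 - xs) by module,
          map_add, map_smul, map_smul]
      rw [h1]; module
  -- recenter the interior ball at the origin
  have hfinal : ∃ ε0 > (0:ℝ), ∃ N' : ℕ, Metric.ball (0:Y) ε0 ⊆ Sn N' := by
    by_cases hy2 : y₂ = 0
    · refine ⟨ρ₂, hρ₂pos, n₀, fun z hz => hball2 z ?_⟩
      rw [Metric.mem_ball] at hz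
      rwa [hy2, dist_zero_right, ← dist_zero_right z]
    · have hy₂pos : 0 < ‖y₂‖ := norm_pos_iff.mpr hy2
      set t : ℝ := r2 / (2 * ‖y₂‖) with htdef
      have ht : 0 < t := by positivity
      set z₀ : Y := -(t • y₂) with hz₀def
      have htnorm : t * ‖y₂‖ = r2 / 2 := by
        rw [htdef]; field_simp
      have hz₀r : z₀ ∈ Metric.closedBall (0:Y) r2 := by
        rw [Metric.mem_closedBall, dist_zero_right, hz₀def, norm_neg, norm_smul,
          Real.norm_eq_abs, abs_of_pos ht, htnorm]
        linarith
      obtain ⟨m, hm⟩ := hS_cover z₀ (hr2S hz₀r)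
      set μ : ℝ := t / (1 + t) with hμdef
      have hμpos : 0 < μ := by positivity
      have hμlt : μ < 1 := by
        rw [hμdef, div_lt_one (by linarith)]; linarith
      refine ⟨μ * ρ₂, by positivity, n₀ + m, ?_⟩
      intro z hz
      rw [Metric.mem_ball, dist_zero_right] at hz
      set w : Y := y₂ + μ⁻¹ • z with hwdef
      have hw : w ∈ Sn n₀ := by
        apply hball2
        rw [dist_eq_norm, hwdef]
        have h0 : y₂ + μ⁻¹ • z - y₂ = μ⁻¹ • z := by abel
        rw [h0, norm_smul, Real.norm_eq_abs, abs_of_pos (inv_pos.mpr hμpos)]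
        rw [inv_mul_lt_iff₀ hμpos]
        exact hz
      have hc : μ = (1 - μ) * t := by
        rw [hμdef]; field_simp; ring
      have hzdecomp : μ • w + (1 - μ) • z₀ = z := by
        have h0 : μ • w + (1 - μ) • z₀ = μ • y₂ + (μ * μ⁻¹) • z - ((1 - μ) * t) • y₂ := by
          rw [hwdef, hz₀def]; module
        rw [h0, mul_inv_cancel₀ hμpos.ne', one_smul, ← hc]
        abel
      have hmem := hcomb μ hμpos.le hμlt.le n₀ m w hw z₀ hm
      rwa [hzdecomp] at hmem
  obtain ⟨ε0, hε0, N', hballN⟩ := hfinal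
  refine ⟨ε0 / 2, by positivity, (N' : ℝ) + 1, by positivity, ?_⟩
  intro u hu
  have hu' : u ∈ Sn N' := by
    apply hballN
    rw [Metric.mem_ball, dist_zero_right]
    linarith
  obtain ⟨a, ⟨haA, haN⟩, k, ⟨hkK, -⟩, hy⟩ := hu'
  exact ⟨a, haA, by linarith, k, hkK, hy.symm⟩

set_option maxHeartbeats 4000000 in
lemma feasibility_step
    {d : ℕ} {Y : Type*} [NormedAddCommGroup Y] [NormedSpace ℝ Y]
    (A : Set (EuclideanSpace ℝ (Fin d))) (K : Set Y)
    (G : EuclideanSpace ℝ (Fin d) → Y)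
    (hAcl : IsClosed A) (hAconv : Convex ℝ A) (hKne : K.Nonempty) (hKcl : IsClosed K)
    (hKconv : Convex ℝ K)
    (hG : ContDiff ℝ 1 G)
    (xs : EuclideanSpace ℝ (Fin d)) (hxA : xs ∈ A)
    (ε' N : ℝ) (hε' : 0 < ε') (hN : 0 < N)
    (hRCQb : ∀ u : Y, ‖u‖ ≤ ε' →
      ∃ a ∈ A, ‖a - xs‖ ≤ N ∧ ∃ k ∈ K, G xs + fderiv ℝ G xs (a - xs) - k = u) :
    ∃ s > (0:ℝ), s ≤ 1 ∧ ∃ σ₀ > (0:ℝ), ∀ x₀ ∈ A, ∀ σ ε₀ : ℝ, 0 < σ → σ ≤ σ₀ → 0 ≤ ε₀ →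
      Metric.infDist (G x₀) K ≤ ε₀ → ε₀ ≤ σ₀ → ε₀ / σ ≤ s / 4 → ‖x₀ - xs‖ ≤ s / 4 →
      ∃ xb ∈ A, G xb ∈ K ∧ ‖xb - x₀‖ ≤ ε₀ / σ := by
  classical
  set T := fderiv ℝ G xs with hTdef
  set C : ℝ := 4 * (N + 1) / ε' with hCdef
  have hC : 0 < C := by positivity
  set η : ℝ := ε' / (32 * (N + 1)) with hηdef
  have hη : 0 < η := by positivity
  have hηC : η * C = 1 / 8 := by rw [hηdef, hCdef]; field_simp; ring
  -- choose the radius s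
  obtain ⟨s, hs, hs1, hsbound⟩ : ∃ s > (0:ℝ), s ≤ 1 ∧
      ∀ ξ : EuclideanSpace ℝ (Fin d), ‖ξ - xs‖ ≤ s → ‖fderiv ℝ G ξ - T‖ ≤ η := by
    have hcont : Continuous (fderiv ℝ G) := hG.continuous_fderiv one_ne_zero
    obtain ⟨δ, hδ, hδb⟩ := Metric.continuous_iff.1 hcont xs η hη
    refine ⟨min (δ / 2) 1, lt_min (by positivity) one_pos, min_le_right _ _, ?_⟩
    intro ξ hξ
    have : dist ξ xs < δ := by
      rw [dist_eq_norm]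
      calc ‖ξ - xs‖ ≤ min (δ / 2) 1 := hξ
        _ ≤ δ / 2 := min_le_left _ _
        _ < δ := by linarith
    have := hδb ξ this
    rw [dist_eq_norm] at this
    exact this.le
  -- mean value inequality
  have hMVT : ∀ x y : EuclideanSpace ℝ (Fin d), ‖x - xs‖ ≤ s → ‖y - xs‖ ≤ s →
      ‖G y - G x - T (y - x)‖ ≤ η * ‖y - x‖ := by
    intro x y hx hy
    have hder : ∀ z ∈ Metric.closedBall xs s,
        HasFDerivWithinAt (fun w => G w - T w) (fderiv ℝ G z - T) (Metric.closedBall xs s) z := by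
      intro z hz
      exact ((hG.differentiable one_ne_zero z).hasFDerivAt.sub (T.hasFDerivAt)).hasFDerivWithinAt
    have hbd : ∀ z ∈ Metric.closedBall xs s, ‖fderiv ℝ G z - T‖ ≤ η := by
      intro z hz
      rw [Metric.mem_closedBall, dist_eq_norm] at hz
      exact hsbound z hz
    have hxmem : x ∈ Metric.closedBall xs s := by
      rw [Metric.mem_closedBall, dist_eq_norm]; exact hx
    have hymem : y ∈ Metric.closedBall xs s := by
      rw [Metric.mem_closedBall, dist_eq_norm]; exact hy
    have := (convex_closedBall xs s).norm_image_sub_le_of_norm_hasFDerivWithin_le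
      hder hbd hxmem hymem
    calc ‖G y - G x - T (y - x)‖ = ‖(G y - T y) - (G x - T x)‖ := by rw [map_sub]; congr 1; abel
      _ ≤ η * ‖y - x‖ := this
  set σ₀ : ℝ := min (ε' / (32 * (N + 1))) (ε' / 8) with hσ₀def
  have hσ₀ : 0 < σ₀ := lt_min (by positivity) (by positivity)
  refine ⟨s, hs, hs1, σ₀, hσ₀, ?_⟩
  intro x₀ hx₀A σ ε₀ hσ hσσ₀ hε₀0 hdist hε₀σ₀ hε₀σ hx₀xs
  -- minimize the penalized function on the compact set E
  set φ : EuclideanSpace ℝ (Fin d) → ℝ := fun x => Metric.infDist (G x) K with hφdef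
  have hφcont : Continuous φ := (Metric.continuous_infDist_pt K).comp hG.continuous
  set ψ : EuclideanSpace ℝ (Fin d) → ℝ := fun x => φ x + σ * ‖x - x₀‖ with hψdef
  have hψcont : Continuous ψ := by
    apply hφcont.add
    exact continuous_const.mul ((continuous_id.sub continuous_const).norm)
  set E := A ∩ Metric.closedBall xs s with hEdef
  have hEcomp : IsCompact E := (isCompact_closedBall xs s).inter_left hAcl
  have hx₀E : x₀ ∈ E := by
    refine ⟨hx₀A, ?_⟩
    rw [Metric.mem_closedBall, dist_eq_norm]
    linarith
  obtain ⟨xb, hxbE, hmin⟩ := hEcomp.exists_isMinOn ⟨x₀, hx₀E⟩ hψcont.continuousOn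
  have hmin' : ∀ x ∈ E, ψ xb ≤ ψ x := fun x hx => hmin hx
  have hψxb : ψ xb ≤ ε₀ := by
    have := hmin' x₀ hx₀E
    simp only [hψdef, sub_self, norm_zero, mul_zero, add_zero] at this
    exact le_trans this hdist
  have hφxb : φ xb ≤ ε₀ := by
    have h1 : 0 ≤ σ * ‖xb - x₀‖ := by positivity
    have : φ xb + σ * ‖xb - x₀‖ ≤ ε₀ := hψxb
    linarith
  have hxbx₀ : ‖xb - x₀‖ ≤ ε₀ / σ := by
    have h1 : 0 ≤ φ xb := Metric.infDist_nonneg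
    have : σ * ‖xb - x₀‖ ≤ ε₀ := by
      have : φ xb + σ * ‖xb - x₀‖ ≤ ε₀ := hψxb
      linarith
    rw [le_div_iff₀ hσ]
    linarith [this]
  have hxbxs : ‖xb - xs‖ ≤ s / 2 := by
    calc ‖xb - xs‖ = ‖(xb - x₀) + (x₀ - xs)‖ := by congr 1; abel
      _ ≤ ‖xb - x₀‖ + ‖x₀ - xs‖ := norm_add_le _ _
      _ ≤ ε₀ / σ + s / 4 := add_le_add hxbx₀ hx₀xs
      _ ≤ s / 4 + s / 4 := by linarith
      _ = s / 2 := by ring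
  have hxbA : xb ∈ A := hxbE.1
  -- the key claim : φ xb = 0
  have hφ0 : φ xb = 0 := by
    by_contra hφne
    have hφpos : 0 < φ xb := lt_of_le_of_ne Metric.infDist_nonneg (Ne.symm hφne)
    set lam : ℝ := min 1 (s / (4 * (N + 1))) with hlamdef
    have hlam0 : 0 < lam := lt_min one_pos (by positivity)
    have hlam1 : lam ≤ 1 := min_le_left _ _
    have key : ∀ ν : ℝ, 0 < ν → ν ≤ ε' / 8 → lam * φ xb ≤ 2 * ν := by
      intro ν hν hνle
      -- nearest-ish point k̄
      obtain ⟨kb, hkbK, hkb⟩ := (Metric.infDist_lt_iff hKne).1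
        (lt_add_of_le_of_pos (le_refl (φ xb)) hν : φ xb < φ xb + ν)
      set e := G xb - kb with hedef
      have hekb : ‖e‖ < φ xb + ν := by rwa [hedef, ← dist_eq_norm]
      have hephi : φ xb ≤ ‖e‖ := by
        rw [hedef, ← dist_eq_norm]
        exact Metric.infDist_le_dist_of_mem hkbK
      have hepos : 0 < ‖e‖ := lt_of_lt_of_le hφpos hephi
      have hσ₀1 : σ₀ ≤ ε' / 8 := min_le_right _ _
      have heε' : ‖e‖ ≤ ε' / 4 := by
        have : ε₀ ≤ ε' / 8 := le_trans hε₀σ₀ hσ₀1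
        linarith
      set rb := G xb - G xs - T (xb - xs) with hrbdef
      have hrb : ‖rb‖ ≤ η * s := by
        have := hMVT xs xb (by simpa using hs.le) (by linarith)
        calc ‖rb‖ ≤ η * ‖xb - xs‖ := this
          _ ≤ η * s := mul_le_mul_of_nonneg_left (by linarith) hη.le
      have hηs : η * s ≤ ε' / 8 := by
        have h1 : η * (32 * (N + 1)) = ε' := by rw [hηdef]; field_simp
        have h2 : η * 8 ≤ η * (32 * (N + 1)) :=
          mul_le_mul_of_nonneg_left (by linarith) hη.le
        have h3 : η * s ≤ η * 1 := mul_le_mul_of_nonneg_left hs1 hη.le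
        linarith
      -- linearized correction
      set v := e - rb with hvdef
      set θ : ℝ := 2 * ‖e‖ / ε' with hθdef
      have hθpos : 0 < θ := by positivity
      have hθ1 : θ ≤ 1 := by rw [hθdef, div_le_one hε']; linarith
      set u := v - (ε' / (2 * ‖e‖)) • e with hudef
      have hu : ‖u‖ ≤ ε' := by
        have h1 : ‖u‖ ≤ ‖v‖ + ‖(ε' / (2 * ‖e‖)) • e‖ := norm_sub_le _ _
        have h2 : ‖(ε' / (2 * ‖e‖)) • e‖ = ε' / 2 := by
          rw [norm_smul, Real.norm_eq_abs, abs_of_pos (by positivity)]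
          field_simp
        have h3 : ‖v‖ ≤ ‖e‖ + ‖rb‖ := norm_sub_le _ _
        rw [h2] at h1
        linarith
      obtain ⟨a, haA, haN, ka, hkaK, hua⟩ := hRCQb u hu
      set x' := xb + θ • (a - xb) with hx'def
      have hx'A : x' ∈ A := by
        have : x' = (1 - θ) • xb + θ • a := by rw [hx'def]; module
        rw [this]
        exact hAconv hxbA haA (by linarith) hθpos.le (by ring)
      set k' := (1 - θ) • kb + θ • ka with hk'def
      have hk'K : k' ∈ K := hKconv hkbK hkaK (by linarith) hθpos.le (by ring)
      -- the linearized equation at x'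
      have hTv : T (xb - xs) = v - G xs + kb := by
        rw [hvdef, hedef, hrbdef]; abel
      have hTa : T (a - xs) = u - G xs + ka := by rw [← hua]; abel
      have hθe : θ * (ε' / (2 * ‖e‖)) = 1 := by
        rw [hθdef]; field_simp
      have hx'eq : G xs + T (x' - xs) - k' = -rb := by
        have hTsplit : T (x' - xs) = (1 - θ) • T (xb - xs) + θ • T (a - xs) := by
          rw [show x' - xs = (1 - θ) • (xb - xs) + θ • (a - xs) by rw [hx'def]; module,
            map_add, map_smul, map_smul]
        have hkey : G xs + T (x' - xs) - k' = v - (θ * (ε' / (2 * ‖e‖))) • e := by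
          rw [hTsplit, hTv, hTa, hk'def, hudef]; module
        rw [hkey, hθe, one_smul, hvdef]; abel
      -- step bound
      have hstep : ‖x' - xb‖ ≤ C * ‖e‖ := by
        have h1 : ‖x' - xb‖ = θ * ‖a - xb‖ := by
          rw [hx'def]
          rw [show xb + θ • (a - xb) - xb = θ • (a - xb) by abel]
          rw [norm_smul, Real.norm_eq_abs, abs_of_pos hθpos]
        have h2 : ‖a - xb‖ ≤ N + 1 := by
          calc ‖a - xb‖ = ‖(a - xs) + (xs - xb)‖ := by congr 1; abel
            _ ≤ ‖a - xs‖ + ‖xs - xb‖ := norm_add_le _ _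
            _ ≤ N + 1 := by
                have hrev : ‖xs - xb‖ = ‖xb - xs‖ := norm_sub_rev _ _
                rw [hrev]
                have : ‖xb - xs‖ ≤ 1 := by linarith
                linarith
        have h3 : θ * (N + 1) = 2 * (N + 1) * ‖e‖ / ε' := by rw [hθdef]; ring
        have h4 : 2 * (N + 1) * ‖e‖ / ε' ≤ C * ‖e‖ := by
          have h4' : C * ‖e‖ = 4 * (N + 1) * ‖e‖ / ε' := by rw [hCdef]; ring
          rw [h4']
          have h5 : 2 * (N + 1) * ‖e‖ ≤ 4 * (N + 1) * ‖e‖ :=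
            mul_le_mul_of_nonneg_right (by linarith) (norm_nonneg e)
          exact (div_le_div_iff_of_pos_right hε').mpr h5
        calc ‖x' - xb‖ = θ * ‖a - xb‖ := h1
          _ ≤ θ * (N + 1) := mul_le_mul_of_nonneg_left h2 hθpos.le
          _ ≤ C * ‖e‖ := by rw [h3]; exact h4
      -- the comparison point
      set xl := xb + lam • (x' - xb) with hxldef
      have hxlA : xl ∈ A := by
        have : xl = (1 - lam) • xb + lam • x' := by rw [hxldef]; module
        rw [this]
        exact hAconv hxbA hx'A (by linarith) hlam0.le (by ring)
      have hxlxb : ‖xl - xb‖ = lam * ‖x' - xb‖ := by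
        rw [hxldef, show xb + lam • (x' - xb) - xb = lam • (x' - xb) by abel,
          norm_smul, Real.norm_eq_abs, abs_of_pos hlam0]
      have hlamstep : lam * ‖x' - xb‖ ≤ s / 4 := by
        have h1 : lam ≤ s / (4 * (N + 1)) := min_le_right _ _
        have h2 : ‖x' - xb‖ ≤ C * (ε' / 4) := by
          have := mul_le_mul_of_nonneg_left heε' hC.le
          linarith [hstep]
        have h3 : C * (ε' / 4) = N + 1 := by rw [hCdef]; field_simp
        rw [h3] at h2
        calc lam * ‖x' - xb‖ ≤ (s / (4 * (N + 1))) * (N + 1) := by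
              apply mul_le_mul h1 h2 (norm_nonneg _)
              positivity
          _ = s / 4 := by field_simp
      have hxlball : ‖xl - xs‖ ≤ s := by
        calc ‖xl - xs‖ = ‖(xl - xb) + (xb - xs)‖ := by congr 1; abel
          _ ≤ ‖xl - xb‖ + ‖xb - xs‖ := norm_add_le _ _
          _ ≤ s / 4 + s / 2 := by
              rw [hxlxb]
              exact add_le_add hlamstep hxbxs
          _ ≤ s := by linarith
      have hxlE : xl ∈ E := by
        refine ⟨hxlA, ?_⟩
        rw [Metric.mem_closedBall, dist_eq_norm]
        exact hxlball
      -- the decrease estimate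
      set rl := G xl - G xb - T (xl - xb) with hrldef
      have hrl : ‖rl‖ ≤ η * (lam * ‖x' - xb‖) := by
        have := hMVT xb xl (by linarith) hxlball
        rw [← hxlxb]
        exact this
      set κ := (1 - lam) • kb + lam • k' with hκdef
      have hκK : K.Nonempty := hKne
      have hκmem : κ ∈ K := hKconv hkbK hk'K (by linarith) hlam0.le (by ring)
      have hGκ : G xl - κ = (1 - lam) • e + rl := by
        have hGxl : G xl = G xb + T (xl - xb) + rl := by rw [hrldef]; abel
        have hTxl : T (xl - xb) = lam • T (x' - xb) := by
          rw [show xl - xb = lam • (x' - xb) by rw [hxldef]; abel, map_smul]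
        have hTx'xs : T (x' - xs) = -rb - G xs + k' := by rw [← hx'eq]; abel
        have hTx'xb : T (x' - xb) = T (x' - xs) - T (xb - xs) := by
          rw [← map_sub]; congr 1; abel
        have hGxb : G xb = kb + e := by rw [hedef]; abel
        rw [hGxl, hTxl, hTx'xb, hTx'xs, hTv, hGxb, hκdef, hvdef]
        module
      have hφxl : φ xl ≤ (1 - lam) * ‖e‖ + η * (lam * ‖x' - xb‖) := by
        have h1 : φ xl ≤ dist (G xl) κ := Metric.infDist_le_dist_of_mem hκmem
        have h2 : dist (G xl) κ = ‖(1 - lam) • e + rl‖ := by rw [dist_eq_norm, hGκ]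
        have h3 : ‖(1 - lam) • e + rl‖ ≤ (1 - lam) * ‖e‖ + ‖rl‖ := by
          calc ‖(1 - lam) • e + rl‖ ≤ ‖(1 - lam) • e‖ + ‖rl‖ := norm_add_le _ _
            _ = (1 - lam) * ‖e‖ + ‖rl‖ := by
                rw [norm_smul, Real.norm_eq_abs, abs_of_nonneg (by linarith)]
        linarith [hrl]
      -- minimality comparison
      have hcompare : φ xb ≤ (1 - lam) * ‖e‖ + (η + σ) * (lam * ‖x' - xb‖) := by
        have h1 : ψ xb ≤ ψ xl := hmin' xl hxlE
        have h2 : ‖xl - x₀‖ ≤ ‖xb - x₀‖ + lam * ‖x' - xb‖ := by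
          calc ‖xl - x₀‖ = ‖(xb - x₀) + (xl - xb)‖ := by congr 1; abel
            _ ≤ ‖xb - x₀‖ + ‖xl - xb‖ := norm_add_le _ _
            _ = ‖xb - x₀‖ + lam * ‖x' - xb‖ := by rw [hxlxb]
        have h3 : φ xb + σ * ‖xb - x₀‖ ≤ φ xl + σ * ‖xl - x₀‖ := h1
        have h4 : σ * ‖xl - x₀‖ ≤ σ * (‖xb - x₀‖ + lam * ‖x' - xb‖) :=
          mul_le_mul_of_nonneg_left h2 hσ.le
        have h5 : σ * (‖xb - x₀‖ + lam * ‖x' - xb‖)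
            = σ * ‖xb - x₀‖ + σ * (lam * ‖x' - xb‖) := by ring
        have h6 : (η + σ) * (lam * ‖x' - xb‖)
            = η * (lam * ‖x' - xb‖) + σ * (lam * ‖x' - xb‖) := by ring
        linarith
      -- wrap up with the constants
      have hσC : σ * C ≤ 1 / 8 := by
        have h1 : σ ≤ ε' / (32 * (N + 1)) := le_trans hσσ₀ (min_le_left _ _)
        have h2 : σ * C ≤ (ε' / (32 * (N + 1))) * C :=
          mul_le_mul_of_nonneg_right h1 hC.le
        rw [hCdef] at h2
        have h3 : (ε' / (32 * (N + 1))) * (4 * (N + 1) / ε') = 1 / 8 := by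
          field_simp; ring
        rw [h3] at h2; exact h2
      have hfin : φ xb ≤ (1 - lam) * ‖e‖ + (1 / 4) * (lam * ‖e‖) := by
        have h1 : (η + σ) * (lam * ‖x' - xb‖) ≤ (η + σ) * (lam * (C * ‖e‖)) :=
          mul_le_mul_of_nonneg_left
            (mul_le_mul_of_nonneg_left hstep hlam0.le) (by positivity)
        have h2 : (η + σ) * (lam * (C * ‖e‖)) ≤ (1 / 4) * (lam * ‖e‖) := by
          have hA1 : (η + σ) * (lam * (C * ‖e‖)) = (η * C + σ * C) * (lam * ‖e‖) := by ring
          have hA2 : η * C + σ * C ≤ 1 / 4 := by linarith [hηC, hσC]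
          rw [hA1]
          exact mul_le_mul_of_nonneg_right hA2 (mul_nonneg hlam0.le (norm_nonneg e))
        linarith [hcompare]
      -- conclude lam * φ xb ≤ 2 * ν
      have hB1 : (1 - lam) * ‖e‖ + (1 / 4) * (lam * ‖e‖) = (1 - (3/4) * lam) * ‖e‖ := by ring
      have hB2 : (1 - (3/4) * lam) * ‖e‖ ≤ (1 - (3/4) * lam) * (φ xb + ν) :=
        mul_le_mul_of_nonneg_left hekb.le (by linarith)
      have hB3 : (1 - (3/4) * lam) * (φ xb + ν)
          = φ xb + ν - (3/4) * (lam * φ xb) - (3/4) * (lam * ν) := by ring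
      have hB4 : 0 ≤ lam * ν := mul_nonneg hlam0.le hν.le
      rw [hB1] at hfin
      linarith
    -- conclude φ xb = 0 from key
    have hcontra : lam * φ xb ≤ 2 * min (ε' / 8) (lam * φ xb / 8) := by
      apply key _ _ (min_le_left _ _)
      exact lt_min (by positivity) (by positivity)
    have h1 : min (ε' / 8) (lam * φ xb / 8) ≤ lam * φ xb / 8 := min_le_right _ _
    have h2 : 0 < lam * φ xb := mul_pos hlam0 hφpos
    linarith
  refine ⟨xb, hxbA, ?_, hxbx₀⟩
  rw [(hKcl.mem_iff_infDist_zero hKne)]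
  exact hφ0

section maxHelpers

variable [CompactSpace W] [Nonempty W]
variable {f : EuclideanSpace ℝ (Fin d) → W → ℝ}

lemma cont_slice (hfc : Continuous fun p : EuclideanSpace ℝ (Fin d) × W => f p.1 p.2)
    (x : EuclideanSpace ℝ (Fin d)) : Continuous fun ω => f x ω :=
  hfc.comp (continuous_const.prodMk continuous_id)

lemma le_Fmax (hfc : Continuous fun p : EuclideanSpace ℝ (Fin d) × W => f p.1 p.2)
    (x : EuclideanSpace ℝ (Fin d)) (ω : W) : f x ω ≤ Fmax f x :=
  le_csSup (isCompact_range (cont_slice hfc x)).bddAbove (mem_range_self ω)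

lemma exists_max (hfc : Continuous fun p : EuclideanSpace ℝ (Fin d) × W => f p.1 p.2)
    (x : EuclideanSpace ℝ (Fin d)) : ∃ ω, f x ω = Fmax f x := by
  obtain ⟨ω, hω⟩ := (isCompact_range (cont_slice hfc x)).sSup_mem (range_nonempty _)
  exact ⟨ω, hω⟩

lemma inner_gradient (g : EuclideanSpace ℝ (Fin d) → ℝ) (x h : EuclideanSpace ℝ (Fin d)) :
    ⟪gradient g x, h⟫ = fderiv ℝ g x h :=
  InnerProductSpace.toDual_symm_apply

lemma bddAbove_inner_grads (hfg : Continuous fun p : EuclideanSpace ℝ (Fin d) × W =>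
      gradient (fun z => f z p.2) p.1) (x h : EuclideanSpace ℝ (Fin d)) :
    BddAbove ((fun v => ⟪v, h⟫) '' activeGrads f x) := by
  have hcont : Continuous fun ω : W => ⟪gradient (fun z => f z ω) x, h⟫ := by
    have h1 : Continuous fun ω : W => gradient (fun z => f z ω) x :=
      hfg.comp (continuous_const.prodMk continuous_id)
    exact (Continuous.inner h1 continuous_const)
  have hsub : (fun v => ⟪v, h⟫) '' activeGrads f x ⊆
      range fun ω : W => ⟪gradient (fun z => f z ω) x, h⟫ := by
    rintro - ⟨-, ⟨ω, hω, rfl⟩, rfl⟩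
    exact mem_range_self ω
  exact ((isCompact_range hcont).bddAbove).mono hsub

lemma cluster_filter {W' : Type*} [TopologicalSpace W'] [CompactSpace W'] (u : ℕ → W') :
    ∃ ω : W', (atTop ⊓ comap u (𝓝 ω)).NeBot ∧
      Tendsto u (atTop ⊓ comap u (𝓝 ω)) (𝓝 ω) := by
  obtain ⟨ω, hω⟩ := exists_clusterPt_of_compactSpace (map u atTop)
  refine ⟨ω, ?_, tendsto_comap.mono_left inf_le_right⟩
  have h1 : map u (atTop ⊓ comap u (𝓝 ω)) = map u atTop ⊓ 𝓝 ω := Filter.push_pull u atTop (𝓝 ω)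
  have h2 : (map u atTop ⊓ 𝓝 ω).NeBot := by
    rw [inf_comm]; exact hω
  have h3 : (map u (atTop ⊓ comap u (𝓝 ω))).NeBot := by rw [h1]; exact h2
  exact h3.of_map

end maxHelpers

theorem aux_sufficiency
    {d : ℕ} {W : Type*} [TopologicalSpace W] [CompactSpace W] [T2Space W] [Nonempty W]
    {Y : Type*} [NormedAddCommGroup Y] [NormedSpace ℝ Y] [CompleteSpace Y]
    (A : Set (EuclideanSpace ℝ (Fin d))) (K : Set Y)
    (G : EuclideanSpace ℝ (Fin d) → Y) (f : EuclideanSpace ℝ (Fin d) → W → ℝ)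
    (hKcl : IsClosed K)
    (hG : ContDiff ℝ 1 G)
    (hfdiff : ∀ ω, Differentiable ℝ (fun x => f x ω))
    (hfc : Continuous fun p : EuclideanSpace ℝ (Fin d) × W => f p.1 p.2)
    (hfg : Continuous fun p : EuclideanSpace ℝ (Fin d) × W => gradient (fun z => f z p.2) p.1)
    (xs : EuclideanSpace ℝ (Fin d)) (hxA : xs ∈ A) (hxK : G xs ∈ K) :
    ((∀ h ∈ contingentCone A xs, h ≠ 0 → fderiv ℝ G xs h ∈ contingentCone K (G xs) →
        0 < Fdir f xs h) →
      (∃ ρ > (0:ℝ), ∃ U ∈ 𝓝 xs, ∀ x ∈ U, x ∈ A → G x ∈ K →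
        Fmax f xs + ρ * ‖x - xs‖ ≤ Fmax f x)) := by
  intro hsuff
  by_contra hgrow
  push_neg at hgrow
  -- extract a minimizing sequence violating the growth condition
  have hseq : ∀ n : ℕ, ∃ x : EuclideanSpace ℝ (Fin d), x ∈ A ∧ G x ∈ K ∧
      ‖x - xs‖ < 1 / (n + 1) ∧ Fmax f x < Fmax f xs + (1 / (n + 1)) * ‖x - xs‖ := by
    intro n
    have hpos : (0:ℝ) < 1 / (n + 1) := by positivity
    obtain ⟨x, hxU, hxA', hxK', hlt⟩ := hgrow (1 / (n + 1)) hpos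
      (Metric.ball xs (1 / (n + 1))) (Metric.ball_mem_nhds xs hpos)
    rw [Metric.mem_ball, dist_eq_norm] at hxU
    exact ⟨x, hxA', hxK', hxU, hlt⟩
  choose x hxA' hxK' hxnear hxlt using hseq
  have hxne : ∀ n, x n ≠ xs := by
    intro n hx
    have := hxlt n
    rw [hx] at this
    simp at this
  set a : ℕ → ℝ := fun n => ‖x n - xs‖ with hadef
  have hapos : ∀ n, 0 < a n := fun n => norm_pos_iff.mpr (sub_ne_zero.mpr (hxne n))
  have ha0 : Tendsto a atTop (𝓝 0) := by
    apply squeeze_zero (fun n => (hapos n).le) (fun n => (hxnear n).le)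
    exact tendsto_one_div_add_atTop_nhds_zero_nat
  set u : ℕ → EuclideanSpace ℝ (Fin d) := fun n => (a n)⁻¹ • (x n - xs) with hudef
  have huns : ∀ n, u n ∈ Metric.sphere (0 : EuclideanSpace ℝ (Fin d)) 1 := by
    intro n
    rw [Metric.mem_sphere, dist_zero_right, hudef]
    rw [norm_smul, Real.norm_eq_abs, abs_of_pos (inv_pos.mpr (hapos n))]
    rw [inv_mul_eq_div]
    exact div_self (hapos n).ne'
  obtain ⟨h, hhs, φ, hφmono, hφtend⟩ :=
    (isCompact_sphere (0 : EuclideanSpace ℝ (Fin d)) 1).tendsto_subseq huns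
  have hh1 : ‖h‖ = 1 := by rwa [Metric.mem_sphere, dist_zero_right] at hhs
  have hhne : h ≠ 0 := by intro h0; rw [h0, norm_zero] at hh1; norm_num at hh1
  have hsmul : ∀ n, a n • u n = x n - xs := by
    intro n
    rw [hudef, smul_smul, mul_inv_cancel₀ (hapos n).ne', one_smul]
  have haφ : Tendsto (fun m => a (φ m)) atTop (𝓝 0) := ha0.comp hφmono.tendsto_atTop
  have hmemA : ∀ m, xs + a (φ m) • u (φ m) ∈ A := by
    intro m; rw [hsmul]; simpa using hxA' (φ m)
  have hhT : h ∈ contingentCone A xs :=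
    ⟨fun m => a (φ m), fun m => u (φ m), fun m => hapos (φ m), haφ, hφtend, hmemA⟩
  -- DG h ∈ T_K(G xs)
  set w : ℕ → Y := fun m => (a (φ m))⁻¹ • (G (xs + a (φ m) • u (φ m)) - G xs) with hwdef
  have hwT : Tendsto w atTop (𝓝 (fderiv ℝ G xs h)) :=
    hadamard_quotient (hG.differentiable one_ne_zero xs) (fun m => hapos (φ m)) haφ hφtend
  have hmemK : ∀ m, G xs + a (φ m) • w m ∈ K := by
    intro m
    rw [hwdef]
    simp only
    rw [smul_smul, mul_inv_cancel₀ (hapos (φ m)).ne', one_smul]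
    rw [hsmul]
    have : xs + (x (φ m) - xs) = x (φ m) := by abel
    rw [show G xs + (G (xs + (x (φ m) - xs)) - G xs) = G (xs + (x (φ m) - xs)) by abel, this]
    exact hxK' (φ m)
  have hKT : fderiv ℝ G xs h ∈ contingentCone K (G xs) := by
    refine ⟨fun m => a (φ m), w, fun m => hapos (φ m), haφ, hwT, ?_⟩
    intro m
    have := hmemK m
    convert this using 3
  have hpos := hsuff h hhT hhne hKT
  -- now show Fdir f xs h ≤ 0 for a contradiction
  have hle : Fdir f xs h ≤ 0 := by
    apply Real.sSup_le _ le_rfl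
    rintro q ⟨-, ⟨ω, hω, rfl⟩, rfl⟩
    show (⟪gradient (fun z => f z ω) xs, h⟫ : ℝ) ≤ 0
    rw [inner_gradient]
    have hquot : Tendsto (fun m => (a (φ m))⁻¹ •
        ((fun z => f z ω) (xs + a (φ m) • u (φ m)) - f xs ω)) atTop
        (𝓝 (fderiv ℝ (fun z => f z ω) xs h)) :=
      hadamard_quotient ((hfdiff ω) xs) (fun m => hapos (φ m)) haφ hφtend
    have hub : ∀ m, (a (φ m))⁻¹ • ((fun z => f z ω) (xs + a (φ m) • u (φ m)) - f xs ω)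
        ≤ 1 / (φ m + 1) := by
      intro m
      have h1 : f (xs + a (φ m) • u (φ m)) ω ≤ Fmax f (x (φ m)) := by
        rw [hsmul, show xs + (x (φ m) - xs) = x (φ m) by abel]
        exact le_Fmax hfc (x (φ m)) ω
      have h2 : Fmax f (x (φ m)) < Fmax f xs + (1 / (φ m + 1)) * a (φ m) := hxlt (φ m)
      have h3 : f xs ω = Fmax f xs := hω
      have h4 : f (xs + a (φ m) • u (φ m)) ω - f xs ω < (1 / (φ m + 1)) * a (φ m) := by
        linarith
      rw [smul_eq_mul]
      rw [inv_mul_le_iff₀ (hapos (φ m))]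
      calc f (xs + a (φ m) • u (φ m)) ω - f xs ω ≤ (1 / (φ m + 1)) * a (φ m) := h4.le
        _ = a (φ m) * (1 / (φ m + 1)) := by ring
    have hzero : Tendsto (fun m : ℕ => 1 / ((φ m : ℝ) + 1)) atTop (𝓝 0) := by
      have h1 : Tendsto (fun m : ℕ => 1 / ((m : ℝ) + 1)) atTop (𝓝 0) :=
        tendsto_one_div_add_atTop_nhds_zero_nat
      apply squeeze_zero (fun m => by positivity) (fun m => ?_) h1
      have hm' : (m : ℝ) ≤ (φ m : ℝ) := Nat.cast_le.mpr (hφmono.id_le m)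
      exact one_div_le_one_div_of_le (by positivity) (by linarith)
    exact le_of_tendsto_of_tendsto' hquot hzero hub
  linarith

set_option maxHeartbeats 2000000 in
theorem aux_necessity
    {d : ℕ} {W : Type*} [TopologicalSpace W] [CompactSpace W] [T2Space W] [Nonempty W]
    {Y : Type*} [NormedAddCommGroup Y] [NormedSpace ℝ Y] [CompleteSpace Y]
    (A : Set (EuclideanSpace ℝ (Fin d))) (K : Set Y)
    (G : EuclideanSpace ℝ (Fin d) → Y) (f : EuclideanSpace ℝ (Fin d) → W → ℝ)
    (hAne : A.Nonempty) (hAcl : IsClosed A) (hAconv : Convex ℝ A)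
    (hKne : K.Nonempty) (hKcl : IsClosed K) (hKconv : Convex ℝ K)
    (hKcone : ∀ (c : ℝ), 0 ≤ c → ∀ y ∈ K, c • y ∈ K)
    (hG : ContDiff ℝ 1 G)
    (hfdiff : ∀ ω, Differentiable ℝ (fun x => f x ω))
    (hfc : Continuous fun p : EuclideanSpace ℝ (Fin d) × W => f p.1 p.2)
    (hfg : Continuous fun p : EuclideanSpace ℝ (Fin d) × W => gradient (fun z => f z p.2) p.1)
    (xs : EuclideanSpace ℝ (Fin d)) (hxA : xs ∈ A) (hxK : G xs ∈ K) :
    ((∃ ρ > (0:ℝ), ∃ U ∈ 𝓝 xs, ∀ x ∈ U, x ∈ A → G x ∈ K →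
        Fmax f xs + ρ * ‖x - xs‖ ≤ Fmax f x) → RobinsonCQ G K A xs →
      (∀ h ∈ contingentCone A xs, h ≠ 0 → fderiv ℝ G xs h ∈ contingentCone K (G xs) →
        0 < Fdir f xs h)) := by
  rintro ⟨ρ, hρ, U, hU, hgrow⟩ hRCQ h ⟨α, v, hαpos, hα0, hvtend, hvA⟩ hne hTK
  obtain ⟨β, wseq, hβpos, hβ0, hwtend, hwK⟩ := hTK
  obtain ⟨ε', hε', N, hN, hRCQb⟩ :=
    bounded_RCQ A K G hAcl hAconv hKcl hKconv xs hxA hxK hRCQ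
  obtain ⟨s, hs, hs1, σ₀, hσ₀, hfeas⟩ :=
    feasibility_step A K G hAcl hAconv hKne hKcl hKconv hG xs hxA ε' N hε' hN hRCQb
  set T := fderiv ℝ G xs with hTdef
  -- convex segments
  have hA_seg : ∀ n, ∀ t : ℝ, 0 < t → t ≤ α n → xs + t • v n ∈ A := by
    intro n t ht htα
    have h1 : xs + t • v n = (1 - t / α n) • xs + (t / α n) • (xs + α n • v n) := by
      have hαn := (hαpos n).ne'
      rw [smul_add, smul_smul]
      rw [div_mul_cancel₀ _ hαn]
      module
    rw [h1]
    exact hAconv hxA (hvA n) (by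
        rw [sub_nonneg, div_le_one (hαpos n)]; exact htα)
      (div_nonneg ht.le (hαpos n).le) (by ring)
  have hK_seg : ∀ n, ∀ t : ℝ, 0 < t → t ≤ β n → G xs + t • wseq n ∈ K := by
    intro n t ht htβ
    have h1 : G xs + t • wseq n = (1 - t / β n) • G xs + (t / β n) • (G xs + β n • wseq n) := by
      have hβn := (hβpos n).ne'
      rw [smul_add, smul_smul]
      rw [div_mul_cancel₀ _ hβn]
      module
    rw [h1]
    exact hKconv hxK (hwK n) (by
        rw [sub_nonneg, div_le_one (hβpos n)]; exact htβ)
      (div_nonneg ht.le (hβpos n).le) (by ring)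
  set t : ℕ → ℝ := fun n => min (α n) (β n) with htdef
  have htpos : ∀ n, 0 < t n := fun n => lt_min (hαpos n) (hβpos n)
  have ht0 : Tendsto t atTop (𝓝 0) := by
    apply squeeze_zero (fun n => (htpos n).le) (fun n => min_le_left _ _) hα0
  set p : ℕ → EuclideanSpace ℝ (Fin d) := fun n => xs + t n • v n with hpdef
  have hpA : ∀ n, p n ∈ A := fun n => hA_seg n (t n) (htpos n) (min_le_left _ _)
  have hpK : ∀ n, G xs + t n • wseq n ∈ K := fun n =>
    hK_seg n (t n) (htpos n) (min_le_right _ _)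
  -- residual estimate
  set ε : ℕ → ℝ := fun n => ‖(t n)⁻¹ • (G (p n) - G xs) - wseq n‖ + 1 / (n + 1) with hεdef
  have hεpos : ∀ n, 0 < ε n := by
    intro n
    have : (0:ℝ) < 1 / (n + 1) := by positivity
    have := norm_nonneg ((t n)⁻¹ • (G (p n) - G xs) - wseq n)
    rw [hεdef]
    positivity
  have hquot : Tendsto (fun n => (t n)⁻¹ • (G (p n) - G xs)) atTop (𝓝 (T h)) := by
    simp only [hpdef]
    exact hadamard_quotient (hG.differentiable one_ne_zero xs) htpos ht0 hvtend
  have hε0 : Tendsto ε atTop (𝓝 0) := by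
    have h1 : Tendsto (fun n => (t n)⁻¹ • (G (p n) - G xs) - wseq n) atTop (𝓝 0) := by
      have := hquot.sub hwtend
      simpa using this
    have h2 : Tendsto (fun n => ‖(t n)⁻¹ • (G (p n) - G xs) - wseq n‖) atTop (𝓝 0) := by
      simpa using h1.norm
    have h3 : Tendsto (fun n : ℕ => 1 / ((n:ℝ) + 1)) atTop (𝓝 0) :=
      tendsto_one_div_add_atTop_nhds_zero_nat
    rw [hεdef]
    simpa using h2.add h3
  have hinf : ∀ n, Metric.infDist (G (p n)) K ≤ t n * ε n := by
    intro n
    have h1 : Metric.infDist (G (p n)) K ≤ dist (G (p n)) (G xs + t n • wseq n) :=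
      Metric.infDist_le_dist_of_mem (hpK n)
    have h2 : dist (G (p n)) (G xs + t n • wseq n)
        = t n * ‖(t n)⁻¹ • (G (p n) - G xs) - wseq n‖ := by
      rw [dist_eq_norm, ← norm_smul_of_nonneg (htpos n).le, smul_sub, smul_smul,
        mul_inv_cancel₀ (htpos n).ne', one_smul]
      congr 1
      abel
    have h3 : t n * ‖(t n)⁻¹ • (G (p n) - G xs) - wseq n‖ ≤ t n * ε n := by
      apply mul_le_mul_of_nonneg_left _ (htpos n).le
      rw [hεdef]
      have : (0:ℝ) ≤ 1 / (n+1) := by positivity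
      simp only
      linarith
    rw [h2] at h1
    exact le_trans h1 h3
  -- the feasibility parameters
  set σ : ℕ → ℝ := fun n => min (Real.sqrt (ε n)) σ₀ with hσdef
  have hσpos : ∀ n, 0 < σ n := fun n => lt_min (Real.sqrt_pos.mpr (hεpos n)) hσ₀
  set δ : ℕ → ℝ := fun n => ε n / σ n with hδdef
  have hδ0 : Tendsto δ atTop (𝓝 0) := by
    have hbound : ∀ n, δ n ≤ Real.sqrt (ε n) + ε n / σ₀ := by
      intro n
      rw [hδdef]
      simp only
      rcases le_total (Real.sqrt (ε n)) σ₀ with hc | hc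
      · have : σ n = Real.sqrt (ε n) := min_eq_left hc
        rw [this]
        have h1 : ε n / Real.sqrt (ε n) = Real.sqrt (ε n) := by
          rw [Real.div_sqrt]
        rw [h1]
        have : 0 ≤ ε n / σ₀ := by positivity
        linarith
      · have : σ n = σ₀ := min_eq_right hc
        rw [this]
        have : 0 ≤ Real.sqrt (ε n) := Real.sqrt_nonneg _
        linarith
    have hup : Tendsto (fun n => Real.sqrt (ε n) + ε n / σ₀) atTop (𝓝 0) := by
      have h1 : Tendsto (fun n => Real.sqrt (ε n)) atTop (𝓝 0) := by
        have := (Real.continuous_sqrt.tendsto 0).comp hε0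
        simpa [Function.comp_def] using this
      have h2 : Tendsto (fun n => ε n / σ₀) atTop (𝓝 0) := by
        have := hε0.div_const σ₀
        simpa using this
      simpa using h1.add h2
    exact squeeze_zero (fun n => by
      have := hεpos n
      have := hσpos n
      positivity) hbound hup
  -- verify the feasibility hypotheses eventually
  have hvnorm : Tendsto (fun n => t n * ‖v n‖) atTop (𝓝 0) := by
    have := ht0.mul hvtend.norm
    simpa using this
  have htε : Tendsto (fun n => t n * ε n) atTop (𝓝 0) := by
    have := ht0.mul hε0
    simpa using this
  have htδ : Tendsto (fun n => t n * δ n) atTop (𝓝 0) := by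
    have := ht0.mul hδ0
    simpa using this
  have hεσ : ∀ n, (t n * ε n) / σ n = t n * δ n := by
    intro n
    rw [hδdef]
    field_simp
  have hev : ∀ᶠ n in atTop, t n * ε n ≤ σ₀ ∧ t n * δ n ≤ s / 4 ∧ t n * ‖v n‖ ≤ s / 4 := by
    have h1 := htε.eventually (eventually_le_nhds hσ₀)
    have h2 := htδ.eventually (eventually_le_nhds (by positivity : (0:ℝ) < s / 4))
    have h3 := hvnorm.eventually (eventually_le_nhds (by positivity : (0:ℝ) < s / 4))
    filter_upwards [h1, h2, h3] with n e1 e2 e3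
    exact ⟨e1, e2, e3⟩
  obtain ⟨n₀, hn₀⟩ := eventually_atTop.1 hev
  have hsel : ∀ m : ℕ, ∃ xb, xb ∈ A ∧ G xb ∈ K ∧ ‖xb - p (m + n₀)‖ ≤ t (m + n₀) * δ (m + n₀) := by
    intro m
    have hm : n₀ ≤ m + n₀ := le_add_self
    obtain ⟨e1, e2, e3⟩ := hn₀ (m + n₀) hm
    have hp4 : ‖p (m + n₀) - xs‖ ≤ s / 4 := by
      rw [hpdef]
      simp only [add_sub_cancel_left]
      rw [norm_smul, Real.norm_eq_abs, abs_of_pos (htpos _)]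
      exact e3
    obtain ⟨xb, hxbA, hxbK, hxbd⟩ := hfeas (p (m + n₀)) (hpA _) (σ (m + n₀)) (t (m + n₀) * ε (m + n₀))
      (hσpos _) (min_le_right _ _) (mul_nonneg (htpos _).le (hεpos _).le) (hinf _) e1
      (by rw [hεσ]; exact e2) hp4
    refine ⟨xb, hxbA, hxbK, ?_⟩
    calc ‖xb - p (m + n₀)‖ ≤ (t (m + n₀) * ε (m + n₀)) / σ (m + n₀) := hxbd
      _ = t (m + n₀) * δ (m + n₀) := hεσ _
  choose xb hxbA hxbK hxbd using hsel
  -- the normalized directions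
  set V : ℕ → EuclideanSpace ℝ (Fin d) := fun m => (t (m + n₀))⁻¹ • (xb m - xs) with hVdef
  have hδ' : Tendsto (fun m => δ (m + n₀)) atTop (𝓝 0) := hδ0.comp (tendsto_add_atTop_nat n₀)
  have hsplit : ∀ m, V m = (t (m + n₀))⁻¹ • (xb m - p (m + n₀)) + v (m + n₀) := by
    intro m
    have hp : p (m + n₀) = xs + t (m + n₀) • v (m + n₀) := by rw [hpdef]
    rw [hVdef]
    simp only
    rw [show xb m - xs = (xb m - (xs + t (m + n₀) • v (m + n₀))) + t (m + n₀) • v (m + n₀) by abel,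
      smul_add, smul_smul, inv_mul_cancel₀ (htpos _).ne', one_smul, ← hp]
  have hsecond : Tendsto (fun m => (t (m + n₀))⁻¹ • (xb m - p (m + n₀))) atTop (𝓝 0) := by
    have hb : ∀ m, ‖(t (m + n₀))⁻¹ • (xb m - p (m + n₀))‖ ≤ δ (m + n₀) := by
      intro m
      rw [norm_smul, Real.norm_eq_abs, abs_of_pos (inv_pos.mpr (htpos _)),
        inv_mul_le_iff₀ (htpos _)]
      exact hxbd m
    exact squeeze_zero_norm hb hδ'
  have hVtend : Tendsto V atTop (𝓝 h) := by
    have hv' : Tendsto (fun m => v (m + n₀)) atTop (𝓝 h) :=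
      hvtend.comp (tendsto_add_atTop_nat n₀)
    have := hsecond.add hv'
    rw [zero_add] at this
    have hfun : (fun m => (t (m + n₀))⁻¹ • (xb m - p (m + n₀)) + v (m + n₀)) = V :=
      funext fun m => (hsplit m).symm
    rwa [hfun] at this
  have hxbeq : ∀ m, xb m = xs + t (m + n₀) • V m := by
    intro m
    rw [hVdef]
    simp only
    rw [smul_smul, mul_inv_cancel₀ (htpos _).ne', one_smul]
    abel
  have ht' : Tendsto (fun m => t (m + n₀)) atTop (𝓝 0) := ht0.comp (tendsto_add_atTop_nat n₀)
  have hxbtend : Tendsto xb atTop (𝓝 xs) := by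
    have h1 : Tendsto (fun m => t (m + n₀) • V m) atTop (𝓝 ((0:ℝ) • h)) := ht'.smul hVtend
    rw [zero_smul] at h1
    have h2 : Tendsto (fun m => xs + t (m + n₀) • V m) atTop (𝓝 (xs + 0)) :=
      tendsto_const_nhds.add h1
    rw [add_zero] at h2
    have hfun : (fun m => xs + t (m + n₀) • V m) = xb := funext fun m => (hxbeq m).symm
    rwa [hfun] at h2
  have hxbU : ∀ᶠ m in atTop, xb m ∈ U := hxbtend hU
  have hgrowth : ∀ᶠ m in atTop, Fmax f xs + ρ * ‖xb m - xs‖ ≤ Fmax f (xb m) := by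
    filter_upwards [hxbU] with m hm
    exact hgrow (xb m) hm (hxbA m) (hxbK m)
  -- maximizers and mean value theorem
  choose ωm hωm using fun m => exists_max hfc (xb m)
  have hMVTm : ∀ m, ∃ c ∈ Ioo (0:ℝ) 1,
      ⟪gradient (fun z => f z (ωm m)) (xs + c • (xb m - xs)), xb m - xs⟫
        = f (xb m) (ωm m) - f xs (ωm m) := by
    intro m
    set dm := xb m - xs with hdm
    have hcurve : ∀ τ : ℝ, HasDerivAt (fun τ : ℝ => xs + τ • dm) dm τ := by
      intro τ
      simpa using ((hasDerivAt_id τ).smul_const dm).const_add xs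
    have hgd : ∀ τ : ℝ, HasDerivAt (fun τ => f (xs + τ • dm) (ωm m))
        (fderiv ℝ (fun z => f z (ωm m)) (xs + τ • dm) dm) τ := by
      intro τ
      exact ((hfdiff (ωm m) _).hasFDerivAt.comp_hasDerivAt τ (hcurve τ))
    have hcontm : ContinuousOn (fun τ : ℝ => f (xs + τ • dm) (ωm m)) (Icc 0 1) := by
      apply Continuous.continuousOn
      exact ((hfdiff (ωm m)).continuous).comp
        (continuous_const.add (continuous_id.smul continuous_const))
    obtain ⟨c, hc, hceq⟩ := exists_hasDerivAt_eq_slope (fun τ => f (xs + τ • dm) (ωm m))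
      (fun τ => fderiv ℝ (fun z => f z (ωm m)) (xs + τ • dm) dm) one_pos hcontm
      (fun τ _ => hgd τ)
    refine ⟨c, hc, ?_⟩
    rw [inner_gradient, hceq]
    simp [hdm]
  choose c hcIoo hceq using hMVTm
  set ξ : ℕ → EuclideanSpace ℝ (Fin d) := fun m => xs + c m • (xb m - xs) with hξdef
  have hchain : ∀ᶠ m in atTop,
      ρ * ‖V m‖ ≤ ⟪gradient (fun z => f z (ωm m)) (ξ m), V m⟫ := by
    filter_upwards [hgrowth] with m hm
    have e0 : xb m - xs = t (m + n₀) • V m := by rw [hxbeq m]; abel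
    have e1 : ‖xb m - xs‖ = t (m + n₀) * ‖V m‖ := by
      rw [e0, norm_smul, Real.norm_eq_abs, abs_of_pos (htpos _)]
    have e2 : f xs (ωm m) ≤ Fmax f xs := le_Fmax hfc xs _
    have e3 : ⟪gradient (fun z => f z (ωm m)) (ξ m), xb m - xs⟫
        = f (xb m) (ωm m) - f xs (ωm m) := hceq m
    have e4 : ⟪gradient (fun z => f z (ωm m)) (ξ m), xb m - xs⟫
        = t (m + n₀) * ⟪gradient (fun z => f z (ωm m)) (ξ m), V m⟫ := by
      rw [e0, real_inner_smul_right]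
    have e5 : Fmax f (xb m) = f (xb m) (ωm m) := (hωm m).symm
    have e6 : t (m + n₀) * (ρ * ‖V m‖) ≤ t (m + n₀) * ⟪gradient (fun z => f z (ωm m)) (ξ m), V m⟫ := by
      rw [← e4, e3]
      rw [e1] at hm
      rw [e5] at hm
      nlinarith [hm, e2]
    exact le_of_mul_le_mul_left e6 (htpos _)
  -- cluster point of the maximizers
  obtain ⟨ωst, hLne, hωL⟩ := cluster_filter ωm
  set L := atTop ⊓ comap ωm (𝓝 ωst) with hLdef
  haveI : L.NeBot := hLne
  have hVL : Tendsto V L (𝓝 h) := hVtend.mono_left inf_le_left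
  have hxbL : Tendsto xb L (𝓝 xs) := hxbtend.mono_left inf_le_left
  have hxbn : Tendsto (fun m => ‖xb m - xs‖) atTop (𝓝 0) := by
    have := (hxbtend.sub_const xs).norm
    simpa using this
  have hξtend : Tendsto ξ atTop (𝓝 xs) := by
    rw [tendsto_iff_norm_sub_tendsto_zero]
    apply squeeze_zero (fun m => norm_nonneg _) _ hxbn
    intro m
    have h1 : ξ m - xs = c m • (xb m - xs) := by rw [hξdef]; simp only; abel
    rw [h1, norm_smul, Real.norm_eq_abs, abs_of_pos (hcIoo m).1]
    exact mul_le_of_le_one_left (norm_nonneg _) (hcIoo m).2.le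
  have hξL : Tendsto ξ L (𝓝 xs) := hξtend.mono_left inf_le_left
  have hgradL : Tendsto (fun m => gradient (fun z => f z (ωm m)) (ξ m)) L
      (𝓝 (gradient (fun z => f z ωst) xs)) := by
    have hpair : Tendsto (fun m => (ξ m, ωm m)) L (𝓝 (xs, ωst)) := hξL.prodMk_nhds hωL
    exact (hfg.tendsto (xs, ωst)).comp hpair
  have hinnerL : Tendsto (fun m => ⟪gradient (fun z => f z (ωm m)) (ξ m), V m⟫) L
      (𝓝 ⟪gradient (fun z => f z ωst) xs, h⟫) := hgradL.inner hVL
  have hlhsL : Tendsto (fun m => ρ * ‖V m‖) L (𝓝 (ρ * ‖h‖)) :=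
    ((hVtend.mono_left inf_le_left).norm).const_mul ρ
  have hmain : ρ * ‖h‖ ≤ ⟪gradient (fun z => f z ωst) xs, h⟫ :=
    le_of_tendsto_of_tendsto hlhsL hinnerL (hchain.filter_mono inf_le_left)
  -- the cluster point is active
  have hactive : ωst ∈ activeSet f xs := by
    have hfxbL : Tendsto (fun m => f (xb m) (ωm m)) L (𝓝 (f xs ωst)) := by
      have hpair : Tendsto (fun m => (xb m, ωm m)) L (𝓝 (xs, ωst)) := hxbL.prodMk_nhds hωL
      exact (hfc.tendsto (xs, ωst)).comp hpair
    have hev : ∀ᶠ m in L, Fmax f xs ≤ f (xb m) (ωm m) := by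
      apply Filter.Eventually.filter_mono inf_le_left
      filter_upwards [hgrowth] with m hm
      have h0 : 0 ≤ ρ * ‖xb m - xs‖ := by positivity
      have h5 := hωm m
      linarith
    have hge : Fmax f xs ≤ f xs ωst := ge_of_tendsto hfxbL hev
    have hle : f xs ωst ≤ Fmax f xs := le_Fmax hfc xs ωst
    exact le_antisymm hle hge
  -- conclusion
  have hmem : ⟪gradient (fun z => f z ωst) xs, h⟫ ∈ (fun v => ⟪v, h⟫) '' activeGrads f xs :=
    ⟨gradient (fun z => f z ωst) xs, ⟨ωst, hactive, rfl⟩, rfl⟩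
  have hfinal : ⟪gradient (fun z => f z ωst) xs, h⟫ ≤ Fdir f xs h :=
    le_csSup (bddAbove_inner_grads hfg xs h) hmem
  have hρh : 0 < ρ * ‖h‖ := mul_pos hρ (norm_pos_iff.mpr hne)
  linarith

end auxLemmas

/-!
Statement 3: sufficient optimality condition and the first order growth condition.
If max_{ω∈W(x*)} ⟨∇ₓf(x*,ω), h⟩ > 0 for every nonzero h ∈ T_A(x*) with DG(x*)h ∈ T_K(G(x*)),
then the first order growth condition holds at x*; conversely, if the first order growth
condition and RCQ hold at x*, then the strict inequality holds for every such h ≠ 0.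
-/
theorem sufficient_condition_iff_first_order_growth
    {d : ℕ} {W : Type*} [TopologicalSpace W] [CompactSpace W] [T2Space W] [Nonempty W]
    {Y : Type*} [NormedAddCommGroup Y] [NormedSpace ℝ Y] [CompleteSpace Y]
    (A : Set (EuclideanSpace ℝ (Fin d))) (K : Set Y)
    (G : EuclideanSpace ℝ (Fin d) → Y) (f : EuclideanSpace ℝ (Fin d) → W → ℝ)
    (hAne : A.Nonempty) (hAcl : IsClosed A) (hAconv : Convex ℝ A)
    (hKne : K.Nonempty) (hKcl : IsClosed K) (hKconv : Convex ℝ K)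
    (hKcone : ∀ (c : ℝ), 0 ≤ c → ∀ y ∈ K, c • y ∈ K)
    (hG : ContDiff ℝ 1 G)
    (hfdiff : ∀ ω, Differentiable ℝ (fun x => f x ω))
    (hfc : Continuous fun p : EuclideanSpace ℝ (Fin d) × W => f p.1 p.2)
    (hfg : Continuous fun p : EuclideanSpace ℝ (Fin d) × W => gradient (fun z => f z p.2) p.1)
    (xs : EuclideanSpace ℝ (Fin d)) (hxA : xs ∈ A) (hxK : G xs ∈ K) :
    ((∀ h ∈ contingentCone A xs, h ≠ 0 → fderiv ℝ G xs h ∈ contingentCone K (G xs) →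
        0 < Fdir f xs h) →
      (∃ ρ > (0:ℝ), ∃ U ∈ 𝓝 xs, ∀ x ∈ U, x ∈ A → G x ∈ K →
        Fmax f xs + ρ * ‖x - xs‖ ≤ Fmax f x)) ∧
    ((∃ ρ > (0:ℝ), ∃ U ∈ 𝓝 xs, ∀ x ∈ U, x ∈ A → G x ∈ K →
        Fmax f xs + ρ * ‖x - xs‖ ≤ Fmax f x) → RobinsonCQ G K A xs →
      (∀ h ∈ contingentCone A xs, h ≠ 0 → fderiv ℝ G xs h ∈ contingentCone K (G xs) →
        0 < Fdir f xs h)) := by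
  constructor
  · exact aux_sufficiency A K G f hKcl hG hfdiff hfc hfg xs hxA hxK
  · exact aux_necessity A K G f hAne hAcl hAconv hKne hKcl hKconv hKcone hG hfdiff hfc hfg xs hxA hxK
end
end
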